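/- arXiv:2208.15000 — 4 statements merged into one kernel-verified Lean document; each statement's English description precedes it below -/
import Mathlib

section
/- Let Q be a finite quiver and M a thin representation of Q over a field K. For every filtration 0 = M_0 ⊂ M_1 ⊂ ⋯ ⊂ M_r = M of M by subrepresentations such that every successive quotient S_i = M_i/M_{i−1} is indecomposable, there exists v ∈ R^{Q0} such that every factor S_i is v-stable; in particular the given filtration is a filtration of M all of whose factors are v-stable representations. -/
attribute [local instance] Classical.propDecidable

/-- A finite quiver: finite sets of vertices and arrows with source and target maps. -/
structure FinQuiver where
  V : Type
  A : Type
  [fintypeV : Fintype V]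
  [decEqV : DecidableEq V]
  [fintypeA : Fintype A]
  [decEqA : DecidableEq A]
  s : A → V
  t : A → V

attribute [instance] FinQuiver.fintypeV FinQuiver.decEqV FinQuiver.fintypeA FinQuiver.decEqA

/-- A finite-dimensional representation of a finite quiver over a field `K`. -/
structure QRep (K : Type) [Field K] (Q : FinQuiver) where
  M : Q.V → Type
  [acg : ∀ i, AddCommGroup (M i)]
  [mod : ∀ i, Module K (M i)]
  [fd : ∀ i, FiniteDimensional K (M i)]
  φ : ∀ a : Q.A, M (Q.s a) →ₗ[K] M (Q.t a)

attribute [instance] QRep.acg QRep.mod QRep.fd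

/-- A subrepresentation: a subspace at every vertex, compatible with the arrow maps. -/
structure QSubRep {K : Type} [Field K] {Q : FinQuiver} (R : QRep K Q) where
  L : ∀ i, Submodule K (R.M i)
  compat : ∀ a : Q.A, ∀ x ∈ L (Q.s a), R.φ a x ∈ L (Q.t a)

def QSubRep.le {K : Type} [Field K] {Q : FinQuiver} {R : QRep K Q} (N N' : QSubRep R) : Prop :=
  ∀ i, N.L i ≤ N'.L i

/-- The dimension vector of a representation. -/
noncomputable def QRep.dimVec {K : Type} [Field K] {Q : FinQuiver} (R : QRep K Q) (i : Q.V) : ℕ :=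
  Module.finrank K (R.M i)

/-- Standard inner product of a real vector with a dimension vector. -/
def stabInner {Q : FinQuiver} (v : Q.V → ℝ) (d : Q.V → ℕ) : ℝ :=
  ∑ i, v i * (d i : ℝ)

/-- `v`-semistability of a representation. -/
def IsSemistable {K : Type} [Field K] {Q : FinQuiver} (R : QRep K Q) (v : Q.V → ℝ) : Prop :=
  stabInner v R.dimVec = 0 ∧
    ∀ N : QSubRep R, stabInner v (fun i => Module.finrank K (N.L i)) ≤ 0

/-- The stability space of a representation. -/
def stabSpace {K : Type} [Field K] {Q : FinQuiver} (R : QRep K Q) : Set (Q.V → ℝ) :=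
  {v | IsSemistable R v}

/-- `v`-stability of a representation. -/
def IsStable {K : Type} [Field K] {Q : FinQuiver} (R : QRep K Q) (v : Q.V → ℝ) : Prop :=
  stabInner v R.dimVec = 0 ∧
    ∀ N : QSubRep R, (∃ i, N.L i ≠ ⊥) → (∃ i, N.L i ≠ ⊤) →
      stabInner v (fun i => Module.finrank K (N.L i)) < 0

/-- The thin sincere representation with identity maps: `K` at every vertex. -/
noncomputable def thinRep (K : Type) [Field K] (Q : FinQuiver) : QRep K Q where
  M _ := K
  φ _ := LinearMap.id

/-- The set of all finite non-negative real linear combinations of elements of `X`. -/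
def coneSpan {E : Type} [AddCommMonoid E] [Module ℝ E] (X : Set E) : Set E :=
  {x | ∃ (n : ℕ) (c : Fin n → ℝ) (f : Fin n → E),
    (∀ j, 0 ≤ c j) ∧ (∀ j, f j ∈ X) ∧ x = ∑ j, c j • f j}

/-- The standard basis vector of `ℝ^{Q₀}` at a vertex. -/
noncomputable def eVec (Q : FinQuiver) (i : Q.V) : Q.V → ℝ := Pi.single i 1

/-- A subrepresentation viewed as a representation in its own right. -/
noncomputable def QSubRep.toRep {K : Type} [Field K] {Q : FinQuiver} {R : QRep K Q}
    (N : QSubRep R) : QRep K Q where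
  M i := ↥(N.L i)
  φ a := (R.φ a).restrict (fun x hx => N.compat a x hx)

/-- The quotient of a representation by a subrepresentation. -/
noncomputable def QRep.quotBy {K : Type} [Field K] {Q : FinQuiver} (R : QRep K Q)
    (N : QSubRep R) : QRep K Q where
  M i := R.M i ⧸ N.L i
  φ a := Submodule.mapQ _ _ (R.φ a) (fun x hx => N.compat a x hx)

/-- The quotient `N'/N` of nested subrepresentations, as a representation. -/
noncomputable def quotRep {K : Type} [Field K] {Q : FinQuiver} (R : QRep K Q)
    (N N' : QSubRep R) (h : QSubRep.le N N') : QRep K Q where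
  M i := ↥(N'.L i) ⧸ Submodule.comap (N'.L i).subtype (N.L i)
  φ a := Submodule.mapQ _ _ ((R.φ a).restrict (fun x hx => N'.compat a x hx))
    (by
      intro x hx
      simp only [Submodule.mem_comap, Submodule.subtype_apply,
        LinearMap.restrict_apply] at hx ⊢
      exact N.compat a _ hx)

/-- A representation is nonzero if some vertex space is nonzero. -/
def QRep.Nonzero {K : Type} [Field K] {Q : FinQuiver} (R : QRep K Q) : Prop :=
  ∃ i, Module.finrank K (R.M i) ≠ 0

/-- Indecomposability: nonzero and admitting no internal direct sum decomposition into two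
nonzero subrepresentations. -/
def Indecomposable {K : Type} [Field K] {Q : FinQuiver} (R : QRep K Q) : Prop :=
  R.Nonzero ∧
    ¬∃ U W : QSubRep R, (∃ i, U.L i ≠ ⊥) ∧ (∃ i, W.L i ≠ ⊥) ∧
      (∀ i, U.L i ⊓ W.L i = ⊥) ∧ (∀ i, U.L i ⊔ W.L i = ⊤)

/-- Isomorphism of representations. -/
def RepIso {K : Type} [Field K] {Q : FinQuiver} (R R' : QRep K Q) : Prop :=
  ∃ f : ∀ i, R.M i ≃ₗ[K] R'.M i,
    ∀ (a : Q.A) (x : R.M (Q.s a)), f (Q.t a) (R.φ a x) = R'.φ a (f (Q.s a) x)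

/-- The support of a representation. -/
def QRep.supp {K : Type} [Field K] {Q : FinQuiver} (R : QRep K Q) : Set Q.V :=
  {i | Module.finrank K (R.M i) ≠ 0}

/-- The stability space restricted to the coordinate subspace of the support. -/
def Dsupp {K : Type} [Field K] {Q : FinQuiver} (R : QRep K Q) : Set (Q.V → ℝ) :=
  stabSpace R ∩ {v | ∀ i, i ∉ R.supp → v i = 0}

/-- Standard inner product on `ℝ^V`. -/
def rInner {V : Type} [Fintype V] (a v : V → ℝ) : ℝ := ∑ i, a i * v i

/-- A face of a polyhedral cone. -/
def IsFace {V : Type} [Fintype V] (C F : Set (V → ℝ)) : Prop :=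
  ∃ a : V → ℝ, (∀ v ∈ C, rInner a v ≤ 0) ∧ F = C ∩ {v | rInner a v = 0}

/-- The dimension of the linear span of a subset of `ℝ^V`. -/
noncomputable def coneDim {V : Type} [Fintype V] (F : Set (V → ℝ)) : ℕ :=
  Module.finrank ℝ ↥(Submodule.span ℝ F)

/-- A facet: a face of codimension one. -/
def IsFacet {V : Type} [Fintype V] (C F : Set (V → ℝ)) : Prop :=
  IsFace C F ∧ coneDim F + 1 = coneDim C

/-- Composability of a list of arrows (a directed path). -/
def PathComposable {Q : FinQuiver} : List Q.A → Prop
  | [] => True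
  | [_] => True
  | a :: b :: l => Q.t a = Q.s b ∧ PathComposable (b :: l)

/-!
For a thin representation `S`, let `S.arrowVec` be the sum of `e_{s(a)} - e_{t(a)}` over the arrows
`a` acting nontrivially on `S`. Both ends of such an arrow are one-dimensional, so an arrow cannot
leave a subrepresentation `N`, and `⟨S.arrowVec, dim N⟩` is minus the number of such arrows entering
`N`. If `S` is indecomposable, every nonzero proper `N` has an entering arrow (otherwise `N` and
the vertices outside it split `S`), so `S` is `S.arrowVec`-stable. In a thin `R` the factors of a
filtration have pairwise disjoint supports, and `arrowVec` vanishes off the support, so the sum of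
the vectors `arrowVec` of all factors makes every factor stable at once.
-/

open Module

theorem Submodule.eq_top_of_ne_bot_of_finrank_le_one {K V : Type} [Field K] [AddCommGroup V]
    [Module K V] [FiniteDimensional K V] (hV : finrank K V ≤ 1) {p : Submodule K V}
    (hp : p ≠ ⊥) : p = ⊤ := by
  have hpos : finrank K p ≠ 0 := fun h => hp (Submodule.finrank_eq_zero.mp h)
  have hle : finrank K p ≤ finrank K V := Submodule.finrank_le p
  exact Submodule.eq_top_of_finrank_eq (by omega)

namespace QRep

variable {K : Type} [Field K] {Q : FinQuiver}

def IsThin (S : QRep K Q) : Prop :=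
  ∀ i, finrank K (S.M i) ≤ 1

noncomputable def arrowVec (S : QRep K Q) : Q.V → ℝ :=
  ∑ a with S.φ a ≠ 0, (eVec Q (Q.s a) - eVec Q (Q.t a))

theorem mem_supp_of_φ_ne_zero {S : QRep K Q} {a : Q.A} (ha : S.φ a ≠ 0) :
    Q.s a ∈ S.supp ∧ Q.t a ∈ S.supp := by
  obtain ⟨x, hx⟩ := DFunLike.ne_iff.mp ha
  constructor
  · intro h
    have := finrank_zero_iff.mp h
    exact hx (by rw [Subsingleton.elim x 0, map_zero, LinearMap.zero_apply])
  · intro h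
    have := finrank_zero_iff.mp h
    exact hx (Subsingleton.elim _ _)

theorem arrowVec_apply_of_notMem_supp {S : QRep K Q} {i : Q.V} (hi : i ∉ S.supp) :
    S.arrowVec i = 0 := by
  rw [arrowVec, Finset.sum_apply]
  refine Finset.sum_eq_zero fun a ha => ?_
  have hends := mem_supp_of_φ_ne_zero (Finset.mem_filter.mp ha).2
  have hs : Q.s a ≠ i := fun h => hi (h ▸ hends.1)
  have ht : Q.t a ≠ i := fun h => hi (h ▸ hends.2)
  simp [eVec, hs.symm, ht.symm]

theorem stabInner_arrowVec (S : QRep K Q) (d : Q.V → ℕ) :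
    stabInner S.arrowVec d = ∑ a with S.φ a ≠ 0, ((d (Q.s a) : ℝ) - d (Q.t a)) := by
  simp only [stabInner, arrowVec, Finset.sum_apply, Finset.sum_mul]
  rw [Finset.sum_comm]
  refine Finset.sum_congr rfl fun a _ => ?_
  simp [eVec, Pi.single_apply, sub_mul, Finset.sum_sub_distrib]

theorem stabInner_congr_of_eqOn_supp {S : QRep K Q} {v w : Q.V → ℝ}
    (hvw : ∀ i ∈ S.supp, v i = w i) {d : Q.V → ℕ} (hd : ∀ i, d i ≤ S.dimVec i) :
    stabInner v d = stabInner w d := by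
  refine Finset.sum_congr rfl fun i _ => ?_
  by_cases hi : i ∈ S.supp
  · rw [hvw i hi]
  · have : d i = 0 := by
      have := hd i
      simp only [supp, Set.mem_ofPred_eq, not_not] at hi
      simp only [dimVec] at this
      omega
    simp [this]

namespace IsThin

variable {S : QRep K Q}

theorem dimVec_eq_one (hS : S.IsThin) {i : Q.V} (hi : i ∈ S.supp) : S.dimVec i = 1 := by
  have := hS i
  simp only [supp, Set.mem_ofPred_eq] at hi
  simp only [dimVec]
  omega

theorem eq_top_of_ne_bot (hS : S.IsThin) (N : QSubRep S) {i : Q.V} (h : N.L i ≠ ⊥) :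
    N.L i = ⊤ :=
  Submodule.eq_top_of_ne_bot_of_finrank_le_one (hS i) h

theorem ne_bot_of_φ_ne_zero (hS : S.IsThin) (N : QSubRep S) {a : Q.A} (ha : S.φ a ≠ 0)
    (hs : N.L (Q.s a) ≠ ⊥) : N.L (Q.t a) ≠ ⊥ := by
  obtain ⟨x, hx⟩ := DFunLike.ne_iff.mp ha
  have hmem : S.φ a x ∈ N.L (Q.t a) := N.compat a x (hS.eq_top_of_ne_bot N hs ▸ trivial)
  intro h
  rw [h, Submodule.mem_bot] at hmem
  exact hx hmem

theorem exists_entering_arrow (hS : S.IsThin) (hind : Indecomposable S) (N : QSubRep S)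
    (hne : ∃ i, N.L i ≠ ⊥) (hpr : ∃ i, N.L i ≠ ⊤) :
    ∃ a, S.φ a ≠ 0 ∧ N.L (Q.s a) = ⊥ ∧ N.L (Q.t a) ≠ ⊥ := by
  by_contra! hcon
  refine hind.2 ⟨N, ⟨fun i => if N.L i = ⊥ then ⊤ else ⊥, fun a x hx => ?_⟩, hne, ?_, ?_, ?_⟩
  · by_cases hs : N.L (Q.s a) = ⊥
    · by_cases ha : S.φ a = 0
      · simp [ha]
      · simp [hcon a ha hs]
    · simp only [if_neg hs, Submodule.mem_bot] at hx
      simp [hx]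
  · obtain ⟨i, hi⟩ := hpr
    have hbot : N.L i = ⊥ := by
      by_contra h
      exact hi (hS.eq_top_of_ne_bot N h)
    refine ⟨i, ?_⟩
    show (if N.L i = ⊥ then ⊤ else ⊥) ≠ ⊥
    rw [if_pos hbot]
    exact (hbot ▸ hi).symm
  · intro i
    by_cases h : N.L i = ⊥ <;> simp [h]
  · intro i
    by_cases h : N.L i = ⊥
    · simp [h]
    · simp [hS.eq_top_of_ne_bot N h]

theorem stabInner_arrowVec_dimVec (hS : S.IsThin) : stabInner S.arrowVec S.dimVec = 0 := by
  rw [stabInner_arrowVec]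
  refine Finset.sum_eq_zero fun a ha => ?_
  have hends := mem_supp_of_φ_ne_zero (Finset.mem_filter.mp ha).2
  simp [hS.dimVec_eq_one hends.1, hS.dimVec_eq_one hends.2]

theorem isStable_arrowVec (hS : S.IsThin) (hind : Indecomposable S) :
    IsStable S S.arrowVec := by
  refine ⟨hS.stabInner_arrowVec_dimVec, fun N hne hpr => ?_⟩
  rw [stabInner_arrowVec]
  obtain ⟨a₀, ha₀, hs₀, ht₀⟩ := hS.exists_entering_arrow hind N hne hpr
  have hterm : ∀ a ∈ ({a | S.φ a ≠ 0} : Finset Q.A),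
      (finrank K (N.L (Q.s a)) : ℝ) - finrank K (N.L (Q.t a)) ≤ 0 := by
    intro a ha
    have hle : finrank K (N.L (Q.s a)) ≤ finrank K (N.L (Q.t a)) := by
      by_cases hs : N.L (Q.s a) = ⊥
      · simp [Submodule.finrank_eq_zero.mpr hs]
      · have ht := hS.ne_bot_of_φ_ne_zero N (Finset.mem_filter.mp ha).2 hs
        have h1 := Submodule.finrank_le (N.L (Q.s a))
        have h2 := hS (Q.s a)
        have h3 : finrank K (N.L (Q.t a)) ≠ 0 := fun h => ht (Submodule.finrank_eq_zero.mp h)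
        omega
    have : (finrank K (N.L (Q.s a)) : ℝ) ≤ finrank K (N.L (Q.t a)) := by exact_mod_cast hle
    linarith
  have hentering : (finrank K (N.L (Q.s a₀)) : ℝ) - finrank K (N.L (Q.t a₀)) < 0 := by
    have : finrank K (N.L (Q.t a₀)) ≠ 0 := fun h => ht₀ (Submodule.finrank_eq_zero.mp h)
    have : (1 : ℝ) ≤ finrank K (N.L (Q.t a₀)) := by exact_mod_cast Nat.one_le_iff_ne_zero.mpr this
    rw [Submodule.finrank_eq_zero.mpr hs₀, Nat.cast_zero]
    linarith
  calc _ < ∑ _a ∈ ({a | S.φ a ≠ 0} : Finset Q.A), (0 : ℝ) :=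
        Finset.sum_lt_sum hterm ⟨a₀, Finset.mem_filter.mpr ⟨Finset.mem_univ _, ha₀⟩, hentering⟩
    _ = 0 := Finset.sum_const_zero

end IsThin

end QRep

section

variable {K : Type} [Field K] {Q : FinQuiver}

theorem IsStable.congr_supp {S : QRep K Q} {v w : Q.V → ℝ} (h : IsStable S v)
    (hvw : ∀ i ∈ S.supp, v i = w i) : IsStable S w := by
  refine ⟨?_, fun N hne hpr => ?_⟩
  · rw [← QRep.stabInner_congr_of_eqOn_supp hvw fun _ => le_rfl]
    exact h.1
  · rw [← QRep.stabInner_congr_of_eqOn_supp hvw fun i => Submodule.finrank_le (N.L i)]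
    exact h.2 N hne hpr

variable {R : QRep K Q}

theorem finrank_quotRep_add (N N' : QSubRep R) (h : N.le N') (i : Q.V) :
    finrank K ((quotRep R N N' h).M i) + finrank K (N.L i) = finrank K (N'.L i) := by
  have := Submodule.finrank_quotient_add_finrank (Submodule.comap (N'.L i).subtype (N.L i))
  rwa [(Submodule.comapSubtypeEquivOfLe (h i)).finrank_eq] at this

theorem QRep.IsThin.isThin_quotRep (hR : R.IsThin) (N N' : QSubRep R) (h : N.le N') :
    (quotRep R N N' h).IsThin := fun i => by
  have := finrank_quotRep_add N N' h i
  have := Submodule.finrank_le (N'.L i)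
  have := hR i
  omega

theorem QRep.IsThin.notMem_supp_quotRep (hR : R.IsThin) {N N' P P' : QSubRep R}
    (h : N.le N') (h' : P.le P') {i : Q.V} (hN'P : N'.L i ≤ P.L i)
    (hi : i ∈ (quotRep R N N' h).supp) : i ∉ (quotRep R P P' h').supp := by
  have := finrank_quotRep_add N N' h i
  have := finrank_quotRep_add P P' h' i
  have := Submodule.finrank_mono hN'P
  have := Submodule.finrank_le (P'.L i)
  have := hR i
  simp only [QRep.supp, Set.mem_ofPred_eq] at hi ⊢
  omega

theorem QRep.IsThin.notMem_supp_of_lt (hR : R.IsThin) {r : ℕ} {F : Fin (r + 1) → QSubRep R}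
    (hmono : ∀ j : Fin r, (F j.castSucc).le (F j.succ)) {j k : Fin r} (hjk : j < k) {i : Q.V}
    (hi : i ∈ (quotRep R (F j.castSucc) (F j.succ) (hmono j)).supp) :
    i ∉ (quotRep R (F k.castSucc) (F k.succ) (hmono k)).supp := by
  have hF : Monotone fun k i => (F k).L i := Fin.monotone_iff_le_succ.mpr hmono
  exact hR.notMem_supp_quotRep _ _ (hF (Fin.succ_le_castSucc_iff.mpr hjk) i) hi

end

theorem filtration_of_thin_module_is_stable_filtration_general (K : Type) [Field K] (Q : FinQuiver)
    (R : QRep K Q) (hthin : ∀ i, Module.finrank K (R.M i) ≤ 1)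
    (r : ℕ) (F : Fin (r + 1) → QSubRep R)
    (hmono : ∀ j : Fin r, QSubRep.le (F j.castSucc) (F j.succ))
    (hind : ∀ j : Fin r, Indecomposable (quotRep R (F j.castSucc) (F j.succ) (hmono j))) :
    ∃ v : Q.V → ℝ, ∀ j : Fin r,
      IsStable (quotRep R (F j.castSucc) (F j.succ) (hmono j)) v := by
  have hR : R.IsThin := hthin
  refine ⟨∑ k, (quotRep R (F k.castSucc) (F k.succ) (hmono k)).arrowVec, fun j => ?_⟩
  refine ((hR.isThin_quotRep _ _ _).isStable_arrowVec (hind j)).congr_supp fun i hi => ?_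
  rw [Finset.sum_apply, Finset.sum_eq_single j]
  · intro k _ hkj
    refine QRep.arrowVec_apply_of_notMem_supp ?_
    rcases lt_or_gt_of_ne hkj with hlt | hgt
    · exact fun hk => hR.notMem_supp_of_lt hmono hlt hk hi
    · exact hR.notMem_supp_of_lt hmono hgt hi
  · exact fun h => absurd (Finset.mem_univ j) h

/-- For a thin representation `R` of a finite quiver, every filtration of
`R` by subrepresentations with indecomposable successive quotients is the filtration by
`v`-stable factors for some stability condition `v`. -/
theorem filtration_of_thin_module_is_stable_filtration (K : Type) [Field K] (Q : FinQuiver)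
    (R : QRep K Q) (hthin : ∀ i, Module.finrank K (R.M i) ≤ 1)
    (r : ℕ) (F : Fin (r + 1) → QSubRep R)
    (h0 : ∀ i, (F 0).L i = ⊥) (hlast : ∀ i, (F (Fin.last r)).L i = ⊤)
    (hmono : ∀ j : Fin r, QSubRep.le (F j.castSucc) (F j.succ))
    (hstrict : ∀ j : Fin r, F j.castSucc ≠ F j.succ)
    (hind : ∀ j : Fin r, Indecomposable (quotRep R (F j.castSucc) (F j.succ) (hmono j))) :
    ∃ v : Q.V → ℝ, ∀ j : Fin r,
      IsStable (quotRep R (F j.castSucc) (F j.succ) (hmono j)) v :=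
  filtration_of_thin_module_is_stable_filtration_general K Q R hthin r F hmono hind
end

section
/- Let Q be a finite quiver with connected underlying graph and let M be a thin sincere representation of Q over a field K all of whose arrow maps are nonzero (so that M is indecomposable). Then the facets of the polyhedral cone D(M) are precisely the sets F_L = {v ∈ R^{Q0} : both L and M/L are v-semistable}, where L ranges over the nonzero proper subrepresentations of M such that both L and the quotient M/L are indecomposable; moreover, under the coordinate decomposition R^{Q0} = R^{supp L} × R^{supp M/L}, one has F_L = D_supp(L) × D_supp(M/L). -/
attribute [local instance] Classical.propDecidable

/-- Connectivity of the underlying graph of a quiver. -/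
def FinQuiver.Connected (Q : FinQuiver) : Prop :=
  Nonempty Q.V ∧ ∀ i j : Q.V, Relation.ReflTransGen
    (fun x y => ∃ a, (Q.s a = x ∧ Q.t a = y) ∨ (Q.s a = y ∧ Q.t a = x)) i j

/-!
For a thin sincere representation `M` with nonzero arrow maps, subrepresentations correspond to
successor-closed vertex sets `T`, so `D(M)` is the polyhedral cone `∑ v = 0, ∑_T v ≤ 0`, and
`F_L = D(L) ∩ D(M/L)` is its face `F_S = {∑_S v = 0}` for `S = supp L`; indecomposability of a
thin representation is connectedness of its support. The vectors `e_{s(a)} - e_{t(a)}` lie in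
the cone; when `S` and its complement are connected, those of the arrows inside `S` or inside `Sᶜ`
span the codimension-two space `∑_S = ∑_{Sᶜ} = 0`, so `F_S` is a facet. Conversely, a relative
interior point of a facet `F` shows that `∑_S` vanishes on `F` for some closed `∅ ≠ S ≠ Q₀`;
comparing dimensions gives `F = F_S`, and a disconnection `T ⊔ T'` of `S` or of `Sᶜ` is
impossible, since `∑_T` would vanish on the span of `F`, which contains `e_i - e_j` for `i ∈ T`,
`j ∈ T'`.
-/

open Finset Module

section Polyhedral

open Filter Topology

variable {V : Type} [Fintype V]

lemma rInner_eq_dotProduct (a v : V → ℝ) : rInner a v = a ⬝ᵥ v := rfl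

lemma IsFace.subset {C F : Set (V → ℝ)} (hF : IsFace C F) : F ⊆ C := by
  obtain ⟨a, -, rfl⟩ := hF
  exact Set.inter_subset_left

lemma IsFace.inter_span_subset {C F : Set (V → ℝ)} (hF : IsFace C F) :
    C ∩ Submodule.span ℝ F ⊆ F := by
  obtain ⟨a, -, rfl⟩ := hF
  rintro v ⟨hvC, hvF⟩
  refine ⟨hvC, ?_⟩
  have hker : Submodule.span ℝ (C ∩ {v | rInner a v = 0}) ≤
      LinearMap.ker (dotProductBilin ℝ ℝ a) :=
    Submodule.span_le.mpr fun u hu => hu.2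
  exact hker hvF

variable {E ι : Type} [AddCommGroup E] [Module ℝ E] [Fintype ι]

lemma exists_mem_forall_lt_or_vanish {F : Set E} (h0 : (0 : E) ∈ F)
    (hadd : ∀ u ∈ F, ∀ w ∈ F, u + w ∈ F) (g : ι → E →ₗ[ℝ] ℝ) (hg : ∀ j, ∀ u ∈ F, g j u ≤ 0) :
    ∃ v₀ ∈ F, ∀ j, g j v₀ < 0 ∨ ∀ u ∈ F, g j u = 0 := by
  have hwit : ∀ j, ∃ u ∈ F, g j u < 0 ∨ ∀ w ∈ F, g j w = 0 := by
    intro j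
    by_cases hj : ∀ w ∈ F, g j w = 0
    · exact ⟨0, h0, Or.inr hj⟩
    · obtain ⟨u, hu, hne⟩ := not_forall₂.mp hj
      exact ⟨u, hu, Or.inl (lt_of_le_of_ne (hg j u hu) hne)⟩
  choose u huF hu using hwit
  refine ⟨∑ k, u k, sum_induction _ (· ∈ F) (fun u w hu hw => hadd u hu w hw) h0 fun k _ => huF k,
    fun j => ?_⟩
  refine (hu j).imp (fun hlt => ?_) id
  calc g j (∑ k, u k) = g j (u j) + ∑ k ∈ univ.erase j, g j (u k) := by
        rw [map_sum, ← add_sum_erase _ _ (mem_univ j)]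
    _ ≤ g j (u j) := add_le_of_nonpos_right (sum_nonpos fun k _ => hg j _ (huF k))
    _ < 0 := hlt

theorem IsFace.eq_or_exists_vanishing {H : Submodule ℝ (V → ℝ)}
    {g : ι → (V → ℝ) →ₗ[ℝ] ℝ} {F : Set (V → ℝ)}
    (hF : IsFace {v | v ∈ H ∧ ∀ j, g j v ≤ 0} F) :
    F = {v | v ∈ H ∧ ∀ j, g j v ≤ 0} ∨
      ∃ j, (∀ v ∈ F, g j v = 0) ∧ ∃ v ∈ H, (∀ k, g k v ≤ 0) ∧ g j v ≠ 0 := by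
  obtain ⟨a, ha, rfl⟩ := hF
  -- Otherwise a relative interior point `v₀` of the face satisfies `v₀ - ε • v ∈ C` for every
  -- `v` in the cone `C` and small `ε > 0`, which forces `a` to vanish on all of `C`.
  refine or_iff_not_imp_right.mpr fun hno => ?_
  push Not at hno
  obtain ⟨v₀, hv₀, hv₀g⟩ := exists_mem_forall_lt_or_vanish
    (F := {v | v ∈ H ∧ ∀ j, g j v ≤ 0} ∩ {v | rInner a v = 0})
    ⟨⟨H.zero_mem, by simp⟩, by simp [rInner_eq_dotProduct]⟩
    (fun u hu w hw => ⟨⟨H.add_mem hu.1.1 hw.1.1, fun j => by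
      simpa using add_nonpos (hu.1.2 j) (hw.1.2 j)⟩, show a ⬝ᵥ (u + w) = 0 by
        rw [dotProduct_add, show a ⬝ᵥ u = 0 from hu.2, show a ⬝ᵥ w = 0 from hw.2, add_zero]⟩)
    g (fun j u hu => hu.1.2 j)
  refine Set.Subset.antisymm Set.inter_subset_left fun v hv => ⟨hv, ?_⟩
  have hev : ∀ᶠ ε in 𝓝 (0 : ℝ), ∀ j, g j (v₀ - ε • v) ≤ 0 := by
    refine eventually_all.2 fun j => ?_
    rcases hv₀g j with hlt | hvan
    · have hcont : Continuous fun ε : ℝ => g j (v₀ - ε • v) := by fun_prop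
      have := hcont.tendsto 0
      simp only [zero_smul, sub_zero] at this
      exact (this.eventually (gt_mem_nhds hlt)).mono fun _ h => h.le
    · simp [hvan v₀ hv₀, hno j hvan v hv.1 hv.2]
  obtain ⟨ε, hε, hεpos⟩ :=
    ((hev.filter_mono nhdsWithin_le_nhds).and (self_mem_nhdsWithin (s := Set.Ioi 0))).exists
  have h1 := ha (v₀ - ε • v) ⟨H.sub_mem hv₀.1.1 (H.smul_mem ε hv.1), hε⟩
  have h2 := ha v hv
  have h3 : rInner a v₀ = 0 := hv₀.2
  simp only [rInner_eq_dotProduct, dotProduct_sub, dotProduct_smul, smul_eq_mul] at h1 h2 h3 ⊢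
  exact le_antisymm h2 (le_of_mul_le_mul_left (by linarith) (hεpos : (0 : ℝ) < ε))

end Polyhedral

namespace FinQuiver

variable (Q : FinQuiver)

def IsClosedIn (X T : Finset Q.V) : Prop :=
  T ⊆ X ∧ ∀ a, Q.s a ∈ T → Q.t a ∈ X → Q.t a ∈ T

def Linked (X : Finset Q.V) (x y : Q.V) : Prop :=
  ∃ a, Q.s a ∈ X ∧ Q.t a ∈ X ∧ ((Q.s a = x ∧ Q.t a = y) ∨ (Q.s a = y ∧ Q.t a = x))

def ConnectedOn (X : Finset Q.V) : Prop :=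
  X.Nonempty ∧ ∀ i ∈ X, ∀ j ∈ X, Relation.ReflTransGen (Q.Linked X) i j

variable {Q} {X S T U : Finset Q.V}

lemma Linked.symm {x y : Q.V} (h : Q.Linked X x y) : Q.Linked X y x := by
  obtain ⟨a, hs, ht, h | h⟩ := h
  exacts [⟨a, hs, ht, Or.inr h⟩, ⟨a, hs, ht, Or.inl h⟩]

instance : Std.Symm (Q.Linked X) := ⟨fun _ _ => Linked.symm⟩

lemma IsClosedIn.trans (hS : Q.IsClosedIn X S) (hT : Q.IsClosedIn S T) : Q.IsClosedIn X T :=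
  ⟨hT.1.trans hS.1, fun a hs ht => hT.2 a hs (hS.2 a (hT.1 hs) ht)⟩

lemma IsClosedIn.inter (hT : Q.IsClosedIn X T) (hS : S ⊆ X) : Q.IsClosedIn S (T ∩ S) :=
  ⟨inter_subset_right, fun a hs ht => mem_inter.mpr ⟨hT.2 a (mem_inter.mp hs).1 (hS ht), ht⟩⟩

lemma IsClosedIn.union_of_compl (hS : Q.IsClosedIn univ S) (hU : Q.IsClosedIn Sᶜ U) :
    Q.IsClosedIn univ (S ∪ U) := by
  refine ⟨subset_univ _, fun a hs _ => ?_⟩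
  by_cases ht : Q.t a ∈ S
  · exact mem_union_left _ ht
  · rcases mem_union.mp hs with hs | hs
    · exact absurd (hS.2 a hs (mem_univ _)) ht
    · exact mem_union_right _ (hU.2 a hs (mem_compl.mpr ht))

lemma ConnectedOn.eq_of_isClosedIn (hX : Q.ConnectedOn X) (hT : Q.IsClosedIn X T)
    (hT' : Q.IsClosedIn X (X \ T)) (hne : T.Nonempty) : T = X := by
  obtain ⟨i, hi⟩ := hne
  refine hT.1.antisymm fun j hj => ?_
  have hij := hX.2 i (hT.1 hi) j hj
  clear hj
  induction hij with
  | refl => exact hi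
  | @tail x y _ hxy ih =>
    obtain ⟨a, hsX, htX, ⟨rfl, rfl⟩ | ⟨rfl, rfl⟩⟩ := hxy
    · exact hT.2 a ih htX
    · by_contra hy
      exact (mem_sdiff.mp (hT'.2 a (mem_sdiff.mpr ⟨hsX, hy⟩) htX)).2 ih

lemma connectedOn_of_forall_isClosedIn (hne : X.Nonempty)
    (h : ∀ T, Q.IsClosedIn X T → Q.IsClosedIn X (X \ T) → T.Nonempty → T = X) :
    Q.ConnectedOn X := by
  obtain ⟨x, hx⟩ := hne
  set R := X.filter (Relation.ReflTransGen (Q.Linked X) x)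
  have hR : R = X := by
    refine h R ⟨filter_subset _ _, fun a hs ht => ?_⟩ ⟨sdiff_subset, fun a hs ht => ?_⟩
      ⟨x, mem_filter.mpr ⟨hx, .refl⟩⟩
    · have hs := mem_filter.mp hs
      exact mem_filter.mpr ⟨ht, hs.2.tail ⟨a, hs.1, ht, Or.inl ⟨rfl, rfl⟩⟩⟩
    · obtain ⟨hsX, hsR⟩ := mem_sdiff.mp hs
      refine mem_sdiff.mpr ⟨ht, fun htR => hsR ?_⟩
      have htR := mem_filter.mp htR
      exact mem_filter.mpr ⟨hsX, htR.2.tail ⟨a, hsX, ht, Or.inr ⟨rfl, rfl⟩⟩⟩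
  have hreach : ∀ i ∈ X, Relation.ReflTransGen (Q.Linked X) x i := fun i hi =>
    (mem_filter.mp (hR ▸ hi : i ∈ R)).2
  exact ⟨⟨x, hx⟩, fun i hi j hj =>
    (Std.Symm.symm _ _ (hreach i hi)).trans (hreach j hj)⟩

lemma connectedOn_iff : Q.ConnectedOn X ↔ X.Nonempty ∧
    ∀ T, Q.IsClosedIn X T → Q.IsClosedIn X (X \ T) → T.Nonempty → T = X :=
  ⟨fun hX => ⟨hX.1, fun _ => hX.eq_of_isClosedIn⟩,
    fun h => connectedOn_of_forall_isClosedIn h.1 h.2⟩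

lemma Connected.connectedOn_univ (hQ : Q.Connected) : Q.ConnectedOn univ := by
  have := hQ.1
  exact ⟨univ_nonempty, fun i _ j _ => Relation.ReflTransGen.mono
    (fun _ _ ⟨a, h⟩ => ⟨a, mem_univ _, mem_univ _, h⟩) _ _ (hQ.2 i j)⟩

end FinQuiver

section CoordSum

variable {V : Type}

def coordSum (T : Finset V) : (V → ℝ) →ₗ[ℝ] ℝ := ∑ i ∈ T, LinearMap.proj i

@[simp] lemma coordSum_apply (T : Finset V) (v : V → ℝ) : coordSum T v = ∑ i ∈ T, v i := by
  simp [coordSum]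

variable [DecidableEq V] {S T X : Finset V}

lemma coordSum_single (T : Finset V) (i : V) (c : ℝ) :
    coordSum T (Pi.single i c) = if i ∈ T then c else 0 := by
  simp [sum_pi_single']

lemma single_sub_single_mem_ker_coordSum {i j : V} (h : i ∈ T ↔ j ∈ T) :
    Pi.single i 1 - Pi.single j 1 ∈ LinearMap.ker (coordSum T) := by
  simp [h]

lemma sum_single_mem_of_single_sub_mem {P : Submodule ℝ (V → ℝ)}
    (hP : ∀ i ∈ X, ∀ j ∈ X, Pi.single i 1 - Pi.single j 1 ∈ P) {v : V → ℝ}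
    (hv : coordSum X v = 0) : ∑ i ∈ X, Pi.single i (v i) ∈ P := by
  rcases X.eq_empty_or_nonempty with rfl | ⟨j, hj⟩
  · simp
  have hsum : ∑ i ∈ X, Pi.single i (v i) = ∑ i ∈ X, v i • (Pi.single i 1 - Pi.single j 1) := by
    rw [coordSum_apply] at hv
    simp only [smul_sub, sum_sub_distrib, ← sum_smul, hv, zero_smul, sub_zero]
    exact sum_congr rfl fun i _ => by rw [← Pi.single_smul', smul_eq_mul, mul_one]
  rw [hsum]
  exact P.sum_mem fun i hi => P.smul_mem _ (hP i hi j hj)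

variable [Fintype V]

lemma finrank_ker_coordSum (hT : T.Nonempty) :
    finrank ℝ (LinearMap.ker (coordSum T)) + 1 = Fintype.card V := by
  obtain ⟨i, hi⟩ := hT
  have hne : coordSum T ≠ 0 := fun h => by
    simpa [coordSum_single, hi] using LinearMap.congr_fun h (Pi.single i 1)
  rw [Module.Dual.finrank_ker_add_one_of_ne_zero hne, finrank_fintype_fun_eq_card]

lemma finrank_ker_coordSum_inf_compl (hS : S.Nonempty) (hSc : Sᶜ.Nonempty) :
    finrank ℝ ↥(LinearMap.ker (coordSum S) ⊓ LinearMap.ker (coordSum Sᶜ)) + 2 =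
      Fintype.card V := by
  obtain ⟨i, hi⟩ := hS
  obtain ⟨j, hj⟩ := hSc
  have hsurj : LinearMap.range ((coordSum S).prod (coordSum Sᶜ)) = ⊤ := by
    refine LinearMap.range_eq_top.mpr fun ⟨x, y⟩ => ⟨Pi.single i x + Pi.single j y, ?_⟩
    simp [sum_add_distrib, sum_pi_single', hi, hj, mem_compl.mp hj]
  have := LinearMap.finrank_range_add_finrank_ker ((coordSum S).prod (coordSum Sᶜ))
  rw [hsurj, finrank_top, LinearMap.ker_prod, finrank_prod, finrank_self,
    finrank_fintype_fun_eq_card] at this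
  omega

end CoordSum

namespace FinQuiver

variable (Q : FinQuiver)

def thinCone (X : Finset Q.V) : Set (Q.V → ℝ) :=
  {v | ∑ i ∈ X, v i = 0 ∧ ∀ T, Q.IsClosedIn X T → ∑ i ∈ T, v i ≤ 0}

def coneFace (S : Finset Q.V) : Set (Q.V → ℝ) :=
  Q.thinCone univ ∩ {v | ∑ i ∈ S, v i = 0}

def arrowVec (a : Q.A) : Q.V → ℝ := Pi.single (Q.s a) 1 - Pi.single (Q.t a) 1

variable {Q} {X S : Finset Q.V}

lemma sum_arrowVec (a : Q.A) (T : Finset Q.V) :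
    ∑ i ∈ T, Q.arrowVec a i = (if Q.s a ∈ T then 1 else 0) - (if Q.t a ∈ T then 1 else 0) := by
  simp [arrowVec, sum_sub_distrib, sum_pi_single']

lemma arrowVec_mem_thinCone (a : Q.A) : Q.arrowVec a ∈ Q.thinCone univ := by
  refine ⟨by simp [sum_arrowVec], fun T hT => ?_⟩
  rw [sum_arrowVec]
  by_cases hs : Q.s a ∈ T
  · simp [hs, hT.2 a hs (mem_univ _)]
  · split_ifs <;> norm_num

lemma arrowVec_mem_coneFace {a : Q.A} (h : Q.s a ∈ S ↔ Q.t a ∈ S) :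
    Q.arrowVec a ∈ Q.coneFace S :=
  ⟨arrowVec_mem_thinCone a, by simp [sum_arrowVec, h]⟩

lemma ConnectedOn.single_sub_single_mem (hX : Q.ConnectedOn X) {P : Submodule ℝ (Q.V → ℝ)}
    (hP : ∀ a, Q.s a ∈ X → Q.t a ∈ X → Q.arrowVec a ∈ P) :
    ∀ i ∈ X, ∀ j ∈ X, Pi.single i 1 - Pi.single j 1 ∈ P := by
  intro i hi j hj
  have hij := hX.2 i hi j hj
  clear hj
  induction hij with
  | refl => simp
  | @tail x y _ hxy ih =>
    obtain ⟨a, hs, ht, ⟨rfl, rfl⟩ | ⟨rfl, rfl⟩⟩ := hxy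
    · simpa [arrowVec] using P.add_mem ih (hP a hs ht)
    · simpa [arrowVec] using P.sub_mem ih (hP a hs ht)

lemma span_thinCone_univ (hQ : Q.Connected) :
    Submodule.span ℝ (Q.thinCone univ) = LinearMap.ker (coordSum univ) := by
  refine le_antisymm (Submodule.span_le.mpr fun v hv => by simpa using hv.1) fun v hv => ?_
  rw [← univ_sum_single v]
  exact sum_single_mem_of_single_sub_mem (hQ.connectedOn_univ.single_sub_single_mem
    fun a _ _ => Submodule.subset_span (arrowVec_mem_thinCone a)) hv

lemma coneFace_subset_ker (S : Finset Q.V) :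
    Q.coneFace S ⊆ LinearMap.ker (coordSum S) ⊓ LinearMap.ker (coordSum Sᶜ) := by
  rintro v ⟨hv, hvS : ∑ i ∈ S, v i = 0⟩
  refine Submodule.mem_inf.mpr ⟨?_, ?_⟩ <;> rw [LinearMap.mem_ker, coordSum_apply]
  · exact hvS
  · linarith [sum_add_sum_compl S v, hv.1]

lemma span_coneFace (hS : Q.ConnectedOn S) (hSc : Q.ConnectedOn Sᶜ) :
    Submodule.span ℝ (Q.coneFace S) =
      LinearMap.ker (coordSum S) ⊓ LinearMap.ker (coordSum Sᶜ) := by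
  refine le_antisymm (Submodule.span_le.mpr (coneFace_subset_ker S)) fun v ⟨hvS, hvSc⟩ => ?_
  rw [← univ_sum_single v, ← sum_add_sum_compl S]
  refine add_mem
    (sum_single_mem_of_single_sub_mem (hS.single_sub_single_mem fun a hs ht => ?_) hvS)
    (sum_single_mem_of_single_sub_mem (hSc.single_sub_single_mem fun a hs ht => ?_) hvSc)
  · exact Submodule.subset_span (arrowVec_mem_coneFace (iff_of_true hs ht))
  · exact Submodule.subset_span
      (arrowVec_mem_coneFace (iff_of_false (mem_compl.mp hs) (mem_compl.mp ht)))

lemma coneFace_isFace (hS : Q.IsClosedIn univ S) : IsFace (Q.thinCone univ) (Q.coneFace S) := by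
  have hind : ∀ v, rInner (fun i => if i ∈ S then 1 else 0) v = ∑ i ∈ S, v i := fun v => by
    simp [rInner, ite_mul, sum_ite_mem]
  exact ⟨_, fun v hv => (hind v).le.trans (hv.2 S hS), by simp only [coneFace, hind]⟩

lemma coneFace_eq_inter (hS : Q.IsClosedIn univ S) :
    Q.coneFace S = Q.thinCone S ∩ Q.thinCone Sᶜ := by
  ext v
  have hsplit := sum_add_sum_compl S v
  simp only [coneFace, thinCone, Set.mem_inter_iff, Set.mem_ofPred_eq]
  constructor
  · rintro ⟨⟨hv, hvT⟩, hvS⟩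
    refine ⟨⟨hvS, fun T hT => hvT T (hS.trans hT)⟩, ⟨by linarith, fun U hU => ?_⟩⟩
    have := hvT _ (hS.union_of_compl hU)
    rwa [sum_union (disjoint_of_subset_right hU.1 disjoint_compl_right), hvS, zero_add] at this
  · rintro ⟨⟨hvS, hvT⟩, ⟨hvSc, hvU⟩⟩
    refine ⟨⟨by linarith, fun T hT => ?_⟩, hvS⟩
    have h1 := hvT _ (hT.inter (subset_univ S))
    have h2 := hvU _ (hT.inter (subset_univ Sᶜ))
    rw [← sum_inter_add_sum_sdiff T S, sdiff_eq_inter_compl]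
    linarith

lemma connectedOn_of_subset_thinCone {F : Set (Q.V → ℝ)} (hX : X.Nonempty)
    (hF : F ⊆ Q.thinCone X)
    (hspan : ∀ i ∈ X, ∀ j ∈ X, Pi.single i 1 - Pi.single j 1 ∈ Submodule.span ℝ F) :
    Q.ConnectedOn X := by
  refine connectedOn_of_forall_isClosedIn hX fun T hT hT' ⟨i, hi⟩ =>
    hT.1.antisymm fun j hj => ?_
  -- `∑_T ≤ 0` and `∑_{X \ T} ≤ 0` add up to `∑_X = 0`, so `∑_T` vanishes on `F`.
  have hvan : Submodule.span ℝ F ≤ LinearMap.ker (coordSum T) := by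
    refine Submodule.span_le.mpr fun v hv => ?_
    have := sum_sdiff hT.1 (f := v)
    have := (hF hv).2 T hT
    have := (hF hv).2 _ hT'
    simp only [SetLike.mem_coe, LinearMap.mem_ker, coordSum_apply]
    linarith [(hF hv).1]
  have := hvan (hspan i (hT.1 hi) j hj)
  simp only [LinearMap.mem_ker, map_sub, coordSum_single, hi, if_true] at this
  by_contra hjT
  simp [hjT] at this

lemma isFacet_coneFace (hS : Q.IsClosedIn univ S) (hcS : Q.ConnectedOn S)
    (hcSc : Q.ConnectedOn Sᶜ) (hQ : Q.Connected) :
    IsFacet (Q.thinCone univ) (Q.coneFace S) := by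
  refine ⟨coneFace_isFace hS, ?_⟩
  have := finrank_ker_coordSum_inf_compl hcS.1 hcSc.1
  have := finrank_ker_coordSum (univ_nonempty_iff.mpr hQ.1)
  rw [coneDim, coneDim, span_coneFace hcS hcSc, span_thinCone_univ hQ]
  omega

lemma thinCone_univ_eq_polyhedral : Q.thinCone univ = {v | v ∈ LinearMap.ker (coordSum univ) ∧
    ∀ T : {T // Q.IsClosedIn univ T}, coordSum T.1 v ≤ 0} := by
  ext v
  simp [thinCone]

lemma exists_subset_coneFace_of_isFacet {F : Set (Q.V → ℝ)}
    (hF : IsFacet (Q.thinCone univ) F) :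
    ∃ S, Q.IsClosedIn univ S ∧ S.Nonempty ∧ Sᶜ.Nonempty ∧ F ⊆ Q.coneFace S := by
  obtain ⟨hface, hdim⟩ := hF
  rw [thinCone_univ_eq_polyhedral] at hface hdim
  obtain rfl | ⟨⟨S, hS⟩, hvan, v, hvH, hvC, hvS⟩ := hface.eq_or_exists_vanishing
  · omega
  refine ⟨S, hS, nonempty_iff_ne_empty.mpr ?_, nonempty_iff_ne_empty.mpr ?_, fun u hu => ?_⟩
  · rintro rfl
    simp at hvS
  · rintro hSc
    rw [compl_eq_empty_iff] at hSc
    exact hvS (hSc ▸ hvH)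
  · refine ⟨?_, by simpa using hvan u hu⟩
    rw [thinCone_univ_eq_polyhedral]
    exact hface.subset hu

lemma exists_eq_coneFace_of_isFacet (hQ : Q.Connected) {F : Set (Q.V → ℝ)}
    (hF : IsFacet (Q.thinCone univ) F) :
    ∃ S, Q.IsClosedIn univ S ∧ Q.ConnectedOn S ∧ Q.ConnectedOn Sᶜ ∧ F = Q.coneFace S := by
  obtain ⟨S, hS, hSne, hScne, hFS⟩ := exists_subset_coneFace_of_isFacet hF
  have hspan :
      Submodule.span ℝ F = LinearMap.ker (coordSum S) ⊓ LinearMap.ker (coordSum Sᶜ) := by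
    refine Submodule.eq_of_le_of_finrank_eq
      ((Submodule.span_mono hFS).trans (Submodule.span_le.mpr (coneFace_subset_ker S))) ?_
    have := hF.2
    have := finrank_ker_coordSum_inf_compl hSne hScne
    have := finrank_ker_coordSum (univ_nonempty_iff.mpr hQ.1)
    rw [coneDim, coneDim, span_thinCone_univ hQ] at *
    omega
  have hFeq : F = Q.coneFace S := hFS.antisymm fun v hv =>
    hF.1.inter_span_subset ⟨hv.1, hspan ▸ coneFace_subset_ker S hv⟩
  have hmem : ∀ i j, (i ∈ S ↔ j ∈ S) → Pi.single i 1 - Pi.single j 1 ∈ Submodule.span ℝ F :=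
    fun i j h => hspan ▸ Submodule.mem_inf.mpr ⟨single_sub_single_mem_ker_coordSum h,
      single_sub_single_mem_ker_coordSum (by simp only [mem_compl, h])⟩
  have hFsub : F ⊆ Q.thinCone S ∩ Q.thinCone Sᶜ := hFeq ▸ (coneFace_eq_inter hS).le
  refine ⟨S, hS, ?_, ?_, hFeq⟩
  · exact connectedOn_of_subset_thinCone hSne (fun v hv => (hFsub hv).1)
      fun i hi j hj => hmem i j (iff_of_true hi hj)
  · exact connectedOn_of_subset_thinCone hScne (fun v hv => (hFsub hv).2)
      fun i hi j hj => hmem i j (iff_of_false (mem_compl.mp hi) (mem_compl.mp hj))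

theorem isFacet_thinCone_univ_iff (hQ : Q.Connected) {F : Set (Q.V → ℝ)} :
    IsFacet (Q.thinCone univ) F ↔
      ∃ S, Q.IsClosedIn univ S ∧ Q.ConnectedOn S ∧ Q.ConnectedOn Sᶜ ∧ F = Q.coneFace S := by
  refine ⟨exists_eq_coneFace_of_isFacet hQ, ?_⟩
  rintro ⟨S, hS, hcS, hcSc, rfl⟩
  exact isFacet_coneFace hS hcS hcSc hQ

end FinQuiver

section ThinRep

variable {K : Type} [Field K] {Q : FinQuiver}

structure IsThinOn (R : QRep K Q) (X : Finset Q.V) : Prop where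
  finrank_eq : ∀ i, finrank K (R.M i) = if i ∈ X then 1 else 0
  map_ne_zero : ∀ a, Q.s a ∈ X → Q.t a ∈ X → R.φ a ≠ 0

noncomputable def QSubRep.support {R : QRep K Q} (N : QSubRep R) : Finset Q.V :=
  univ.filter fun i => N.L i ≠ ⊥

@[simp] lemma QSubRep.mem_support {R : QRep K Q} {N : QSubRep R} {i : Q.V} :
    i ∈ N.support ↔ N.L i ≠ ⊥ := by
  simp [QSubRep.support]

lemma stabInner_eq_sum_of_indicator (v : Q.V → ℝ) {d : Q.V → ℕ} {T : Finset Q.V}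
    (hd : ∀ i, d i = if i ∈ T then 1 else 0) : stabInner v d = ∑ i ∈ T, v i := by
  simp [stabInner, hd, sum_ite_mem]

namespace IsThinOn

variable {R : QRep K Q} {X T : Finset Q.V} (h : IsThinOn R X)
include h

lemma subsingleton {i : Q.V} (hi : i ∉ X) : Subsingleton (R.M i) :=
  finrank_zero_iff.mp (by simpa [hi] using h.finrank_eq i)

lemma nontrivial {i : Q.V} (hi : i ∈ X) : Nontrivial (R.M i) := by
  have : 0 < finrank K (R.M i) := by simp [h.finrank_eq i, hi]
  exact finrank_pos_iff.mp this

lemma eq_top_of_ne_bot {i : Q.V} {N : Submodule K (R.M i)} (hN : N ≠ ⊥) : N = ⊤ := by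
  refine Submodule.eq_top_of_finrank_eq (le_antisymm N.finrank_le ?_)
  have := h.finrank_eq i
  have := Submodule.finrank_eq_zero.not.mpr hN
  split_ifs at * <;> omega

lemma support_subset (N : QSubRep R) : N.support ⊆ X := fun i hi => by
  by_contra hX
  have := h.subsingleton hX
  exact QSubRep.mem_support.mp hi (Subsingleton.elim _ _)

lemma finrank_subRep (N : QSubRep R) (i : Q.V) :
    finrank K (N.L i) = if i ∈ N.support then 1 else 0 := by
  by_cases hi : i ∈ N.support
  · rw [if_pos hi, h.eq_top_of_ne_bot (QSubRep.mem_support.mp hi), finrank_top, h.finrank_eq,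
      if_pos (h.support_subset N hi)]
  · rw [if_neg hi, not_not.mp (mt QSubRep.mem_support.mpr hi), finrank_bot]

lemma support_isClosedIn (N : QSubRep R) : Q.IsClosedIn X N.support := by
  refine ⟨h.support_subset N, fun a hs ht => ?_⟩
  obtain ⟨x, hx⟩ := DFunLike.ne_iff.mp (h.map_ne_zero a (h.support_subset N hs) ht)
  have hxN : x ∈ N.L (Q.s a) := h.eq_top_of_ne_bot (QSubRep.mem_support.mp hs) ▸ trivial
  refine QSubRep.mem_support.mpr fun hbot => hx ?_
  simpa [hbot] using N.compat a x hxN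

def subRep (hT : Q.IsClosedIn X T) : QSubRep R where
  L i := if i ∈ T then ⊤ else ⊥
  compat a x hx := by
    by_cases hs : Q.s a ∈ T
    · by_cases ht : Q.t a ∈ X
      · simp [hT.2 a hs ht]
      · have := h.subsingleton ht
        exact Subsingleton.elim (R.φ a x) 0 ▸ zero_mem _
    · simp [hs] at hx
      simp [hx]

lemma support_subRep (hT : Q.IsClosedIn X T) : (h.subRep hT).support = T := by
  ext i
  by_cases hi : i ∈ T
  · have := h.nontrivial (hT.1 hi)
    simp [subRep, hi]
  · simp [subRep, hi]

lemma eq_ite_support (N : QSubRep R) (i : Q.V) : N.L i = if i ∈ N.support then ⊤ else ⊥ := by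
  split_ifs with hi
  · exact h.eq_top_of_ne_bot (QSubRep.mem_support.mp hi)
  · simpa using hi

lemma ne_top_of_notMem_support {N : QSubRep R} {i : Q.V} (hiX : i ∈ X) (hi : i ∉ N.support) :
    N.L i ≠ ⊤ := by
  have := h.nontrivial hiX
  simp [h.eq_ite_support N i, hi]

lemma stabInner_subRep (v : Q.V → ℝ) (N : QSubRep R) :
    stabInner v (fun i => finrank K (N.L i)) = ∑ i ∈ N.support, v i :=
  stabInner_eq_sum_of_indicator v (h.finrank_subRep N)

lemma stabSpace_eq : stabSpace R = Q.thinCone X := by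
  ext v
  have hdim : stabInner v R.dimVec = ∑ i ∈ X, v i := stabInner_eq_sum_of_indicator v h.finrank_eq
  simp only [stabSpace, IsSemistable, Set.mem_ofPred_eq, hdim, h.stabInner_subRep,
    FinQuiver.thinCone]
  refine and_congr_right' ⟨fun hN T hT => ?_, fun hT N => hT _ (h.support_isClosedIn N)⟩
  simpa [h.support_subRep hT] using hN (h.subRep hT)

lemma nonzero_iff : R.Nonzero ↔ X.Nonempty := by
  simp [QRep.Nonzero, h.finrank_eq, Finset.Nonempty]

lemma support_eq_sdiff_of_isCompl {U W : QSubRep R} (hinf : ∀ i, U.L i ⊓ W.L i = ⊥)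
    (hsup : ∀ i, U.L i ⊔ W.L i = ⊤) : W.support = X \ U.support := by
  ext i
  by_cases hiX : i ∈ X
  · have := h.nontrivial hiX
    have h1 := hinf i
    have h2 := hsup i
    rw [h.eq_ite_support U, h.eq_ite_support W] at h1 h2
    by_cases hU : i ∈ U.support <;> by_cases hW : i ∈ W.support <;> simp_all
  · simp only [mem_sdiff, hiX, false_and, iff_false]
    exact fun hW => hiX (h.support_subset W hW)

lemma exists_decomposition_iff :
    (∃ U W : QSubRep R, (∃ i, U.L i ≠ ⊥) ∧ (∃ i, W.L i ≠ ⊥) ∧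
      (∀ i, U.L i ⊓ W.L i = ⊥) ∧ (∀ i, U.L i ⊔ W.L i = ⊤)) ↔
      ∃ T, Q.IsClosedIn X T ∧ Q.IsClosedIn X (X \ T) ∧ T.Nonempty ∧ T ≠ X := by
  constructor
  · rintro ⟨U, W, ⟨i, hi⟩, ⟨j, hj⟩, hinf, hsup⟩
    have hW := h.support_eq_sdiff_of_isCompl hinf hsup
    refine ⟨U.support, h.support_isClosedIn U, hW ▸ h.support_isClosedIn W,
      ⟨i, QSubRep.mem_support.mpr hi⟩, fun hUX => ?_⟩
    have hjW := QSubRep.mem_support.mpr hj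
    rw [hW, hUX, sdiff_self] at hjW
    exact absurd hjW (notMem_empty j)
  · rintro ⟨T, hT, hT', ⟨i, hi⟩, hTX⟩
    obtain ⟨j, hjX, hjT⟩ := exists_of_ssubset (lt_of_le_of_ne hT.1 hTX)
    refine ⟨h.subRep hT, h.subRep hT', ?_, ?_, fun k => ?_, fun k => ?_⟩
    · exact ⟨i, QSubRep.mem_support.mp ((h.support_subRep hT).symm ▸ hi)⟩
    · exact ⟨j, QSubRep.mem_support.mp
        ((h.support_subRep hT').symm ▸ mem_sdiff.mpr ⟨hjX, hjT⟩)⟩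
    · by_cases hk : k ∈ T <;> simp [subRep, hk]
    · by_cases hkX : k ∈ X
      · by_cases hk : k ∈ T <;> simp [subRep, hk, hkX]
      · have := h.subsingleton hkX
        exact Subsingleton.elim _ _

lemma indecomposable_iff : Indecomposable R ↔ Q.ConnectedOn X := by
  rw [Indecomposable, h.nonzero_iff, h.exists_decomposition_iff, FinQuiver.connectedOn_iff]
  simp only [not_exists, not_and, not_not]

lemma toRep (N : QSubRep R) : IsThinOn N.toRep N.support where
  finrank_eq := h.finrank_subRep N
  map_ne_zero a hs ht h0 := by
    obtain ⟨x, hx⟩ := DFunLike.ne_iff.mp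
      (h.map_ne_zero a (h.support_subset N hs) (h.support_subset N ht))
    have hxN : x ∈ N.L (Q.s a) := h.eq_top_of_ne_bot (QSubRep.mem_support.mp hs) ▸ trivial
    exact hx (congrArg Subtype.val (LinearMap.congr_fun h0 ⟨x, hxN⟩))

lemma quotBy (N : QSubRep R) : IsThinOn (R.quotBy N) (X \ N.support) where
  finrank_eq i := by
    have := Submodule.finrank_quotient_add_finrank (N.L i)
    rw [h.finrank_eq, h.finrank_subRep] at this
    change finrank K (R.M i ⧸ N.L i) = _
    have hsub : i ∈ N.support → i ∈ X := fun hi => h.support_subset N hi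
    by_cases hX : i ∈ X <;> by_cases hN : i ∈ N.support <;> simp_all
  map_ne_zero a hs ht h0 := by
    rw [mem_sdiff, QSubRep.mem_support, not_not] at hs ht
    obtain ⟨x, hx⟩ := DFunLike.ne_iff.mp (h.map_ne_zero a hs.1 ht.1)
    have := LinearMap.congr_fun h0 (Submodule.Quotient.mk x)
    change Submodule.Quotient.mk (R.φ a x) = (0 : R.M (Q.t a) ⧸ N.L (Q.t a)) at this
    rw [Submodule.Quotient.mk_eq_zero, ht.2, Submodule.mem_bot] at this
    exact hx this

end IsThinOn

lemma IsThinOn.quotBy_compl {R : QRep K Q} (h : IsThinOn R univ) (N : QSubRep R) :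
    IsThinOn (R.quotBy N) N.supportᶜ :=
  compl_eq_univ_sdiff N.support ▸ h.quotBy N

lemma IsThinOn.setOf_isSemistable_eq_coneFace {R : QRep K Q} (h : IsThinOn R univ)
    (N : QSubRep R) :
    {v | IsSemistable N.toRep v ∧ IsSemistable (R.quotBy N) v} = Q.coneFace N.support := by
  rw [FinQuiver.coneFace_eq_inter (h.support_isClosedIn N), ← (h.toRep N).stabSpace_eq,
    ← (h.quotBy_compl N).stabSpace_eq]
  rfl

end ThinRep

section Restriction

variable {K : Type} [Field K] {Q : FinQuiver}

lemma stabInner_restrict (v : Q.V → ℝ) {d : Q.V → ℕ} {s : Set Q.V} (hd : ∀ i ∉ s, d i = 0) :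
    stabInner (fun i => if i ∈ s then v i else 0) d = stabInner v d :=
  sum_congr rfl fun i _ => by by_cases hi : i ∈ s <;> simp [hi, hd]

lemma isSemistable_restrict_supp_iff (R : QRep K Q) (v : Q.V → ℝ) :
    IsSemistable R (fun i => if i ∈ R.supp then v i else 0) ↔ IsSemistable R v := by
  have hR : ∀ i ∉ R.supp, R.dimVec i = 0 := fun i hi => not_not.mp hi
  have hN (N : QSubRep R) : ∀ i ∉ R.supp, finrank K (N.L i) = 0 := fun i hi =>
    Nat.eq_zero_of_le_zero ((N.L i).finrank_le.trans (not_not.mp hi).le)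
  rw [IsSemistable, IsSemistable, stabInner_restrict v hR]
  exact and_congr_right' (forall_congr' fun N => by rw [stabInner_restrict v (hN N)])

end Restriction

/-- For an indecomposable thin sincere representation `M` of a connected
quiver (all arrow maps nonzero), the facets of `D(M)` are exactly the sets
`F_L = {v : L and M/L are v-semistable}` where `L` runs over nonzero proper
subrepresentations with `L` and `M/L` indecomposable; moreover each `F_L` decomposes as the
product `D_supp(L) × D_supp(M/L)` with respect to the coordinate decomposition of `ℝ^{Q₀}`
along the supports. -/
theorem facets_of_stability_space_of_thin_module (K : Type) [Field K] (Q : FinQuiver)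
    (hconn : Q.Connected) (M : QRep K Q)
    (hthin : ∀ i, Module.finrank K (M.M i) = 1)
    (hnz : ∀ a : Q.A, M.φ a ≠ 0) :
    ({F | IsFacet (stabSpace M) F} =
      {F | ∃ L : QSubRep M, (∃ i, L.L i ≠ ⊥) ∧ (∃ i, L.L i ≠ ⊤) ∧
        Indecomposable L.toRep ∧ Indecomposable (M.quotBy L) ∧
        F = {v : Q.V → ℝ | IsSemistable L.toRep v ∧ IsSemistable (M.quotBy L) v}}) ∧
      ∀ L : QSubRep M, (∃ i, L.L i ≠ ⊥) → (∃ i, L.L i ≠ ⊤) →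
        Indecomposable L.toRep → Indecomposable (M.quotBy L) →
        {v : Q.V → ℝ | IsSemistable L.toRep v ∧ IsSemistable (M.quotBy L) v} =
          {v : Q.V → ℝ |
            (fun i => if i ∈ L.toRep.supp then v i else 0) ∈ stabSpace L.toRep ∧
            (fun i => if i ∈ (M.quotBy L).supp then v i else 0) ∈ stabSpace (M.quotBy L)} := by
  have hM : IsThinOn M univ := ⟨fun i => by simp [hthin i], fun a _ _ => hnz a⟩
  refine ⟨?_, fun L _ _ _ _ => ?_⟩
  · ext F
    rw [Set.mem_ofPred_eq, hM.stabSpace_eq, FinQuiver.isFacet_thinCone_univ_iff hconn]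
    constructor
    · rintro ⟨S, hS, hcS, hcSc, rfl⟩
      have hL : (hM.subRep hS).support = S := hM.support_subRep hS
      obtain ⟨i, hi⟩ := hcS.1
      obtain ⟨j, hj⟩ := hcSc.1
      refine ⟨hM.subRep hS, ⟨i, QSubRep.mem_support.mp (by rwa [hL])⟩,
        ⟨j, hM.ne_top_of_notMem_support (mem_univ j) (by rwa [hL, ← mem_compl])⟩,
        (hM.toRep _).indecomposable_iff.mpr (by rwa [hL]),
        (hM.quotBy_compl _).indecomposable_iff.mpr (by rwa [hL]), ?_⟩
      rw [hM.setOf_isSemistable_eq_coneFace, hL]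
    · rintro ⟨L, -, -, hL, hML, rfl⟩
      exact ⟨L.support, hM.support_isClosedIn L, (hM.toRep L).indecomposable_iff.mp hL,
        (hM.quotBy_compl L).indecomposable_iff.mp hML, hM.setOf_isSemistable_eq_coneFace L⟩
  · ext v
    exact and_congr (isSemistable_restrict_supp_iff _ v).symm
      (isSemistable_restrict_supp_iff _ v).symm
end

section
/- Let P be a finite connected poset and K a field. Then: (1) for every connected compatible partition (P_1,…,P_k) of P there exist a permutation σ of {1,…,k} and a filtration 0 = L_0 ⊂ L_1 ⊂ ⋯ ⊂ L_k = M_P by subrepresentations with L_j/L_{j−1} ≅ M_{P_{σ(j)}} for all j, and each M_{P_i} is indecomposable; (2) conversely, for every filtration 0 = L_0 ⊂ L_1 ⊂ ⋯ ⊂ L_k = M_P by subrepresentations all of whose successive quotients are indecomposable, there is a connected compatible partition (P_1,…,P_k) of P such that L_j/L_{j−1} ≅ M_{P_j} for all j. -/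
attribute [local instance] Classical.propDecidable

/-- The Hasse quiver of a finite poset: one arrow `y → x` for each covering relation `x ⋖ y`. -/
noncomputable def hasseQuiver (P : Type) [PartialOrder P] [Fintype P] [DecidableEq P] :
    FinQuiver where
  V := P
  A := {q : P × P // q.1 ⋖ q.2}
  fintypeA := Fintype.ofFinite _
  s q := q.1.2
  t q := q.1.1

/-- The representation `M_S` of the Hasse quiver of `P` attached to a subset `S ⊆ P`:
a copy of `K` at each element of `S`, zero elsewhere, identity maps whenever possible. -/
noncomputable def MS (K : Type) [Field K] (P : Type) [PartialOrder P] [Fintype P]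
    [DecidableEq P] (S : Finset P) : QRep K (hasseQuiver P) where
  M p := ↥(if p ∈ S then (⊤ : Submodule K K) else ⊥)
  φ a :=
    if h : (hasseQuiver P).s a ∈ S ∧ (hasseQuiver P).t a ∈ S then
      { toFun := fun x => ⟨(x : K), by simp [h.2]⟩
        map_add' := fun x y => rfl
        map_smul' := fun c x => rfl }
    else 0

/-- The covering relation of the subposet induced on a subset `S`. -/
def covIn {P : Type} [PartialOrder P] (S : Finset P) (x y : P) : Prop :=
  x ∈ S ∧ y ∈ S ∧ x < y ∧ ∀ z ∈ S, ¬(x < z ∧ z < y)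

/-- Connectivity of the Hasse diagram of the subposet induced on `S`. -/
def connectedIn {P : Type} [PartialOrder P] (S : Finset P) : Prop :=
  ∀ x ∈ S, ∀ y ∈ S, Relation.ReflTransGen (fun u v => covIn S u v ∨ covIn S v u) x y

/-- Connectivity of a poset: its Hasse diagram is connected. -/
def posetConnected (P : Type) [PartialOrder P] : Prop :=
  Nonempty P ∧ ∀ x y : P, Relation.ReflTransGen (fun u v => u ⋖ v ∨ v ⋖ u) x y

/-- A partition of `P` into `k` blocks, given as a function `Fin k → Finset P`. -/
def IsFinPartition {P : Type} (k : ℕ) (B : Fin k → Finset P) : Prop :=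
  (∀ i, (B i).Nonempty) ∧ (∀ i j, i ≠ j → Disjoint (B i) (B j)) ∧ ∀ p : P, ∃ i, p ∈ B i

/-- The quotient relation on the blocks of a partition. -/
def blockRel {P : Type} [PartialOrder P] {k : ℕ} (B : Fin k → Finset P) (i j : Fin k) : Prop :=
  ∃ p ∈ B i, ∃ q ∈ B j, p ≤ q

/-- Compatibility of a partition: the transitive closure of the quotient relation is
antisymmetric (hence a partial order on the blocks). -/
def compatiblePart {P : Type} [PartialOrder P] {k : ℕ} (B : Fin k → Finset P) : Prop :=
  ∀ i j, Relation.TransGen (blockRel B) i j → Relation.TransGen (blockRel B) j i → i = j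

/-- The quotient relation on the blocks of a partition given as a finite set of blocks. -/
def blockRelF {P : Type} [PartialOrder P] (π : Finset (Finset P)) (S T : Finset P) : Prop :=
  S ∈ π ∧ T ∈ π ∧ ∃ p ∈ S, ∃ q ∈ T, p ≤ q

/-- The set of connected compatible partitions of `P`, viewed as finite sets of blocks. -/
def CCpartitions (P : Type) [PartialOrder P] [Fintype P] [DecidableEq P] :
    Set (Finset (Finset P)) :=
  {π | (∀ S ∈ π, S.Nonempty) ∧ (∀ S ∈ π, ∀ T ∈ π, S ≠ T → Disjoint S T) ∧
       (∀ p : P, ∃ S ∈ π, p ∈ S) ∧ (∀ S ∈ π, connectedIn S) ∧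
       ∀ S T : Finset P, Relation.TransGen (blockRelF π) S T →
         Relation.TransGen (blockRelF π) T S → S = T}

/-- `T` is a lower set of the subposet induced on the block `S`. -/
def lowerInBlock {P : Type} [PartialOrder P] (S T : Finset P) : Prop :=
  T ⊆ S ∧ ∀ x ∈ S, ∀ y ∈ T, x ≤ y → x ∈ T

/-- The set `F_π` attached to a partition `π` of `P`. -/
def Fpi (K : Type) [Field K] (P : Type) [PartialOrder P] [Fintype P] [DecidableEq P]
    (π : Finset (Finset P)) : Set (P → ℝ) :=
  {v | v ∈ stabSpace (thinRep K (hasseQuiver P)) ∧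
    ∀ S ∈ π, (∑ p ∈ S, v p = 0) ∧ ∀ T : Finset P, lowerInBlock S T → ∑ p ∈ T, v p ≤ 0}

/-!
A subrepresentation of the thin representation `M_P` is `K` on a set of vertices and `0`
elsewhere, and since the arrow maps are identities that set is closed under covers, i.e. it is
a lower set of `P`. So a filtration of `M_P` is a chain of lower sets `∅ = T₀ ⊆ ⋯ ⊆ T_k = P`,
and its successive quotients are the representations `M_{T_j \ T_{j-1}}`.

For an order-convex `S` (such as a block of a compatible partition), covers inside `S` are
covers of `P`, along which the maps of `M_S` are injective; a decomposition `M_S = U ⊕ W`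
therefore splits `S` into two parts joined by no cover, so `M_S` is indecomposable exactly when
`S` is nonempty and connected. The layers of a chain of lower sets form a compatible partition,
because `p ≤ q` puts the layer of `p` no later than that of `q`; conversely, listing the blocks
of a compatible partition along a linear extension of the block order makes every union of
initial blocks a lower set.
-/

-- Lets instance search see the vertex spaces of `thinRep K (hasseQuiver P)` as `K`.
attribute [reducible] hasseQuiver thinRep

section

-- `Classical.propDecidable`, made a local instance above, sends `simp` into a loop on
-- lattices of submodules.
attribute [-instance] Classical.propDecidable

open Finset

section Order

variable {α : Type} {k : ℕ}

theorem isLowerSet_of_covBy [PartialOrder α] [Finite α] {T : Set α}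
    (hT : ∀ ⦃x y⦄, x ⋖ y → y ∈ T → x ∈ T) : IsLowerSet T := by
  classical
  have := Fintype.ofFinite α
  let := Fintype.toLocallyFiniteOrder (α := α)
  intro y x hxy
  replace hxy := le_iff_reflTransGen_covBy.mp hxy
  induction hxy with
  | refl => exact id
  | tail _ hcov ih => exact fun hc => ih (hT hcov hc)

theorem exists_perm_fin_of_isPartialOrder (r : Fin k → Fin k → Prop)
    [IsPartialOrder (Fin k) r] :
    ∃ σ : Equiv.Perm (Fin k), ∀ a b, r (σ a) (σ b) → a ≤ b := by
  obtain ⟨s, _, hrs⟩ := extend_partialOrder r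
  let := Classical.decRel s
  set l := univ.sort s
  have hlen : l.length = k := by simp [l]
  set σ : Fin k → Fin k := fun m => l.get (Fin.cast hlen.symm m)
  have hσ : σ.Injective :=
    fun m m' h => by simpa [Fin.ext_iff] using (sort_nodup univ s).injective_get h
  refine ⟨Equiv.ofBijective σ hσ.bijective_of_finite, fun a b hab => ?_⟩
  by_contra! hba
  have hs : s (σ b) (σ a) := (pairwise_sort univ s).rel_get_of_lt hba
  exact hba.ne (hσ (antisymm hs (hrs _ _ hab)))

end Order

section Chains

variable {α : Type} [DecidableEq α] {k : ℕ}

def chainLayer (T : Fin (k + 1) → Finset α) (j : Fin k) : Finset α :=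
  T j.succ \ T j.castSucc

theorem disjoint_chainLayer {T : Fin (k + 1) → Finset α} (hT : Monotone T) {i j : Fin k}
    (hij : i ≠ j) : Disjoint (chainLayer T i) (chainLayer T j) := by
  wlog hlt : i < j generalizing i j
  · exact (this hij.symm (hij.lt_or_gt.resolve_left hlt)).symm
  have hle : T i.succ ⊆ T j.castSucc := hT (Fin.succ_le_castSucc_iff.mpr hlt)
  exact disjoint_left.mpr fun p hpi hpj => (mem_sdiff.mp hpj).2 (hle (mem_sdiff.mp hpi).1)

theorem exists_mem_chainLayer [Fintype α] {T : Fin (k + 1) → Finset α} (h0 : T 0 = ∅)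
    (hlast : T (Fin.last k) = univ) (p : α) : ∃ j, p ∈ chainLayer T j := by
  by_contra! hp
  have hmem : ∀ j, p ∈ T j := fun j => Fin.reverseInduction (by simp [hlast])
    (fun i hi => by simpa [chainLayer, hi] using hp i) j
  simpa [h0] using hmem 0

theorem le_of_blockRel_chainLayer [PartialOrder α] {T : Fin (k + 1) → Finset α}
    (hT : Monotone T) (hlow : ∀ j, IsLowerSet (T j : Set α)) {i j : Fin k}
    (h : blockRel (chainLayer T) i j) : i ≤ j := by
  obtain ⟨p, hp, q, hq, hpq⟩ := h
  by_contra! hji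
  have hq' : q ∈ T i.castSucc := hT (Fin.succ_le_castSucc_iff.mpr hji) (mem_sdiff.mp hq).1
  exact (mem_sdiff.mp hp).2 (hlow _ hpq hq')

variable [Fintype α]

def prefixUnion (C : Fin k → Finset α) (j : Fin (k + 1)) : Finset α :=
  univ.filter fun p => ∃ m : Fin k, m.castSucc < j ∧ p ∈ C m

theorem mem_prefixUnion {C : Fin k → Finset α} {j : Fin (k + 1)} {p : α} :
    p ∈ prefixUnion C j ↔ ∃ m : Fin k, m.castSucc < j ∧ p ∈ C m := by
  simp [prefixUnion]

theorem prefixUnion_zero (C : Fin k → Finset α) : prefixUnion C 0 = ∅ := by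
  ext p
  simp [mem_prefixUnion]

theorem prefixUnion_last {C : Fin k → Finset α} (hC : ∀ p, ∃ m, p ∈ C m) :
    prefixUnion C (Fin.last k) = univ := by
  refine eq_univ_of_forall fun p => ?_
  obtain ⟨m, hm⟩ := hC p
  exact mem_prefixUnion.mpr ⟨m, Fin.castSucc_lt_last m, hm⟩

theorem monotone_prefixUnion (C : Fin k → Finset α) : Monotone (prefixUnion C) :=
  fun _ _ hij _ hp => by
    obtain ⟨m, hm, hpm⟩ := mem_prefixUnion.mp hp
    exact mem_prefixUnion.mpr ⟨m, hm.trans_le hij, hpm⟩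

theorem chainLayer_prefixUnion {C : Fin k → Finset α}
    (hC : ∀ i j, i ≠ j → Disjoint (C i) (C j)) (j : Fin k) :
    chainLayer (prefixUnion C) j = C j := by
  ext p
  simp only [chainLayer, mem_sdiff, mem_prefixUnion, Fin.castSucc_lt_succ_iff,
    Fin.castSucc_lt_castSucc_iff, not_exists, not_and]
  constructor
  · rintro ⟨⟨m, hmj, hpm⟩, hnot⟩
    obtain rfl : m = j := hmj.eq_or_lt.resolve_right fun hlt => hnot m hlt hpm
    exact hpm
  · intro hpj
    exact ⟨⟨j, le_rfl, hpj⟩, fun m hmj hpm => disjoint_left.mp (hC m j hmj.ne) hpm hpj⟩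

theorem isLowerSet_prefixUnion [PartialOrder α] {C : Fin k → Finset α}
    (hC : ∀ p, ∃ m, p ∈ C m) (hle : ∀ m m', blockRel C m m' → m ≤ m') (j : Fin (k + 1)) :
    IsLowerSet (prefixUnion C j : Set α) := by
  intro y x hxy hy
  obtain ⟨m, hmj, hym⟩ := mem_prefixUnion.mp hy
  obtain ⟨m', hxm'⟩ := hC x
  have hm'm : m'.castSucc ≤ m.castSucc := hle m' m ⟨x, hxm', y, hym, hxy⟩
  exact mem_prefixUnion.mpr ⟨m', hm'm.trans_lt hmj, hxm'⟩

end Chains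

section Partitions

variable {P : Type} [PartialOrder P] {k : ℕ} {B : Fin k → Finset P}

theorem covIn.covBy {S : Finset P} (hS : (S : Set P).OrdConnected) {x y : P}
    (h : covIn S x y) : x ⋖ y :=
  ⟨h.2.2.1, fun z hxz hzy => h.2.2.2 z (hS.out h.1 h.2.1 ⟨hxz.le, hzy.le⟩) ⟨hxz, hzy⟩⟩

theorem CovBy.covIn {S : Finset P} {x y : P} (hx : x ∈ S) (hy : y ∈ S) (h : x ⋖ y) :
    covIn S x y :=
  ⟨hx, hy, h.lt, fun _ _ hz => h.2 hz.1 hz.2⟩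

theorem compatiblePart.ordConnected (hcomp : compatiblePart B)
    (hcover : ∀ p, ∃ i, p ∈ B i) (i : Fin k) : (B i : Set P).OrdConnected := by
  refine ⟨fun x hx z hz y ⟨hxy, hyz⟩ => ?_⟩
  obtain ⟨j, hj⟩ := hcover y
  obtain rfl : i = j :=
    hcomp i j (.single ⟨x, hx, y, hj, hxy⟩) (.single ⟨y, hj, z, hz, hyz⟩)
  exact hj

theorem compatiblePart.isPartialOrder (hcomp : compatiblePart B) :
    IsPartialOrder (Fin k) (Relation.ReflTransGen (blockRel B)) where
  antisymm i j hij hji := by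
    rcases Relation.reflTransGen_iff_eq_or_transGen.mp hij with h | hij
    · exact h.symm
    rcases Relation.reflTransGen_iff_eq_or_transGen.mp hji with h | hji
    · exact h
    exact hcomp i j hij hji

theorem compatiblePart_of_blockRel_le (h : ∀ i j, blockRel B i j → i ≤ j) :
    compatiblePart B := by
  have hle : ∀ i j, Relation.TransGen (blockRel B) i j → i ≤ j := fun i j hij =>
    Relation.TransGen.trans_induction_on hij (h _ _) fun _ _ => le_trans
  exact fun i j hij hji => le_antisymm (hle i j hij) (hle j i hji)

end Partitions

section Representations

variable {K : Type} [Field K] {Q : FinQuiver}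

theorem Submodule.eq_bot_or_eq_top_of_finrank_le_one {M : Type*} [AddCommGroup M]
    [Module K M] [FiniteDimensional K M] (hM : Module.finrank K M ≤ 1) (N : Submodule K M) :
    N = ⊥ ∨ N = ⊤ := by
  have hN := (Submodule.finrank_le N).trans hM
  interval_cases h : Module.finrank K N
  · exact .inl (Submodule.finrank_eq_zero.mp h)
  · exact .inr (Submodule.eq_top_of_finrank_eq (le_antisymm (Submodule.finrank_le N) (h ▸ hM)))

theorem Submodule.eq_bot_iff_ne_bot_of_finrank_eq_one {M : Type*} [AddCommGroup M]
    [Module K M] [FiniteDimensional K M] (hM : Module.finrank K M = 1) {U W : Submodule K M}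
    (hinf : U ⊓ W = ⊥) (hsup : U ⊔ W = ⊤) : U = ⊥ ↔ W ≠ ⊥ := by
  have := Module.nontrivial_of_finrank_eq_succ hM
  constructor
  · rintro rfl
    rw [bot_sup_eq] at hsup
    exact hsup ▸ top_ne_bot
  · intro hW
    rcases Submodule.eq_bot_or_eq_top_of_finrank_le_one hM.le U with hU | rfl
    · exact hU
    · exact absurd (top_inf_eq W ▸ hinf) hW

def QSubRep.comapIso {R R' : QRep K Q} (f : ∀ i, R.M i ≃ₗ[K] R'.M i)
    (hf : ∀ (a : Q.A) (x : R.M (Q.s a)), f (Q.t a) (R.φ a x) = R'.φ a (f (Q.s a) x))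
    (U : QSubRep R') : QSubRep R where
  L i := (Submodule.orderIsoMapComap (f i)).symm (U.L i)
  compat a x hx := by
    simpa [Submodule.orderIsoMapComap_symm_apply, hf a x] using U.compat a _ hx

theorem Indecomposable.of_repIso {R R' : QRep K Q} (hiso : RepIso R R')
    (h : Indecomposable R) : Indecomposable R' := by
  obtain ⟨f, hf⟩ := hiso
  refine ⟨?_, fun ⟨U, W, ⟨i, hU⟩, ⟨j, hW⟩, hinf, hsup⟩ => h.2 ?_⟩
  · obtain ⟨i, hi⟩ := h.1
    exact ⟨i, (f i).finrank_eq ▸ hi⟩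
  refine ⟨U.comapIso f hf, W.comapIso f hf, ⟨i, ?_⟩, ⟨j, ?_⟩, fun i => ?_, fun i => ?_⟩
  all_goals simp only [QSubRep.comapIso, ← map_inf, ← map_sup, hinf, hsup, ne_eq,
    map_eq_bot_iff, map_eq_top_iff]
  exacts [hU, hW]

theorem thinRep_eq_bot_or_eq_top (N : QSubRep (thinRep K Q)) (i : Q.V) :
    N.L i = ⊥ ∨ N.L i = ⊤ :=
  Submodule.eq_bot_or_eq_top_of_finrank_le_one (Module.finrank_self K).le _

end Representations

section ThinRep

variable {K : Type} [Field K] {P : Type} [PartialOrder P] [Fintype P] [DecidableEq P]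

open Classical in
noncomputable def thinSupport (N : QSubRep (thinRep K (hasseQuiver P))) : Finset P :=
  univ.filter fun p => N.L p = ⊤

theorem mem_thinSupport {N : QSubRep (thinRep K (hasseQuiver P))} {p : P} :
    p ∈ thinSupport N ↔ N.L p = ⊤ := by
  simp [thinSupport]

theorem notMem_thinSupport {N : QSubRep (thinRep K (hasseQuiver P))} {p : P} :
    p ∉ thinSupport N ↔ N.L p = ⊥ := by
  rw [mem_thinSupport]
  rcases thinRep_eq_bot_or_eq_top N p with h | h <;> simp [h, eq_comm]

theorem thinSupport_mono {N N' : QSubRep (thinRep K (hasseQuiver P))} (h : QSubRep.le N N') :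
    thinSupport N ⊆ thinSupport N' :=
  fun p hp => mem_thinSupport.mpr (top_unique ((mem_thinSupport.mp hp) ▸ h p))

theorem isLowerSet_thinSupport (N : QSubRep (thinRep K (hasseQuiver P))) :
    IsLowerSet (thinSupport N : Set P) := by
  refine isLowerSet_of_covBy fun x y hxy hy => ?_
  have h1 : (1 : K) ∈ N.L x :=
    N.compat ⟨(x, y), hxy⟩ 1 ((mem_thinSupport.mp hy).symm ▸ Submodule.mem_top)
  rcases thinRep_eq_bot_or_eq_top N x with h | h
  · simp [h] at h1
  · exact mem_thinSupport.mpr h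

noncomputable def lowerSubRep (T : Finset P) (hT : IsLowerSet (T : Set P)) :
    QSubRep (thinRep K (hasseQuiver P)) where
  L p := if p ∈ T then ⊤ else ⊥
  compat a x hx := by
    by_cases hs : (hasseQuiver P).s a ∈ T
    · exact (if_pos (hT a.2.le hs)).symm ▸ Submodule.mem_top
    · simp_all

theorem thinSupport_lowerSubRep (T : Finset P) (hT : IsLowerSet (T : Set P)) :
    thinSupport (lowerSubRep (K := K) T hT) = T := by
  ext p
  by_cases hp : p ∈ T <;> simp [mem_thinSupport, lowerSubRep, hp]

theorem lowerSubRep_le_lowerSubRep {T T' : Finset P} (hT : IsLowerSet (T : Set P))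
    (hT' : IsLowerSet (T' : Set P)) (h : T ⊆ T') :
    QSubRep.le (lowerSubRep (K := K) T hT) (lowerSubRep T' hT') := fun p => by
  by_cases hp : p ∈ T
  · simp [lowerSubRep, hp, h hp]
  · simp [lowerSubRep, hp]

end ThinRep

section MS

variable {K : Type} [Field K] {P : Type} [PartialOrder P] [Fintype P] [DecidableEq P]
  {S : Finset P}

theorem MS.val_eq_zero {p : P} (hp : p ∉ S) (x : (MS K P S).M p) : x.val = 0 := by
  simpa [hp] using x.property

theorem MS.subsingleton {p : P} (hp : p ∉ S) : Subsingleton ((MS K P S).M p) :=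
  ⟨fun x y => Subtype.ext ((MS.val_eq_zero hp x).trans (MS.val_eq_zero hp y).symm)⟩

theorem MS.finrank_eq_one {p : P} (hp : p ∈ S) : Module.finrank K ((MS K P S).M p) = 1 :=
  (LinearEquiv.ofEq _ ⊤ (if_pos hp)).finrank_eq.trans (finrank_top K K ▸ Module.finrank_self K)

theorem MS.top_ne_bot {p : P} (hp : p ∈ S) : (⊤ : Submodule K ((MS K P S).M p)) ≠ ⊥ := by
  have := Module.nontrivial_of_finrank_eq_succ (MS.finrank_eq_one (K := K) hp)
  exact _root_.top_ne_bot

theorem MS.mem_of_ne_bot {V : QSubRep (MS K P S)} {p : P} (h : V.L p ≠ ⊥) : p ∈ S := by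
  by_contra hp
  have := MS.subsingleton (K := K) hp
  exact h (Subsingleton.elim _ _)

theorem MS.val_φ {a : (hasseQuiver P).A}
    (h : (hasseQuiver P).s a ∈ S ∧ (hasseQuiver P).t a ∈ S)
    (x : (MS K P S).M ((hasseQuiver P).s a)) : ((MS K P S).φ a x).val = x.val := by
  simp only [MS, dif_pos h]
  rfl

theorem MS.φ_eq_zero {a : (hasseQuiver P).A}
    (h : ¬((hasseQuiver P).s a ∈ S ∧ (hasseQuiver P).t a ∈ S)) : (MS K P S).φ a = 0 := by
  simp only [MS, dif_neg h]
  rfl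

theorem MS.ne_bot_of_covBy {V : QSubRep (MS K P S)} {x y : P} (hxy : x ⋖ y)
    (hx : x ∈ S) (hy : y ∈ S) (h : V.L y ≠ ⊥) : V.L x ≠ ⊥ := by
  obtain ⟨z, hz, hz0⟩ := (Submodule.ne_bot_iff _).mp h
  refine (Submodule.ne_bot_iff _).mpr
    ⟨_, V.compat ⟨(x, y), hxy⟩ z hz, fun h0 => hz0 (Subtype.ext ?_)⟩
  exact (MS.val_φ (a := ⟨(x, y), hxy⟩) ⟨hy, hx⟩ z).symm.trans (congrArg Subtype.val h0)

theorem indecomposable_MS (hne : S.Nonempty) (hS : (S : Set P).OrdConnected)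
    (hconn : connectedIn S) : Indecomposable (MS K P S) := by
  obtain ⟨p, hp⟩ := hne
  refine ⟨⟨p, by simp [MS.finrank_eq_one hp]⟩, ?_⟩
  rintro ⟨U, W, ⟨i, hU⟩, ⟨j, hW⟩, hinf, hsup⟩
  have hcompl : ∀ p ∈ S, U.L p = ⊥ ↔ W.L p ≠ ⊥ := fun p hp =>
    Submodule.eq_bot_iff_ne_bot_of_finrank_eq_one (MS.finrank_eq_one hp) (hinf p) (hsup p)
  have hstep : ∀ x y, covIn S x y → (U.L x ≠ ⊥ ↔ U.L y ≠ ⊥) := by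
    rintro x y ⟨hx, hy, hxy⟩
    have hcov : x ⋖ y := covIn.covBy hS ⟨hx, hy, hxy⟩
    refine ⟨fun hUx hUy => ?_, MS.ne_bot_of_covBy hcov hx hy⟩
    exact hUx ((hcompl x hx).mpr (MS.ne_bot_of_covBy hcov hx hy ((hcompl y hy).mp hUy)))
  have hUj : U.L j ≠ ⊥ := by
    have hpath := hconn i (MS.mem_of_ne_bot hU) j (MS.mem_of_ne_bot hW)
    clear hW
    induction hpath with
    | refl => exact hU
    | tail _ e ih =>
      rcases e with e | e
      exacts [(hstep _ _ e).mp ih, (hstep _ _ e).mpr ih]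
  exact hUj ((hcompl j (MS.mem_of_ne_bot hW)).mpr hW)

theorem nonempty_of_indecomposable_MS (h : Indecomposable (MS K P S)) : S.Nonempty := by
  obtain ⟨p, hp⟩ := h.1
  by_contra hS
  have := MS.subsingleton (K := K) (fun hpS => hS ⟨p, hpS⟩)
  exact hp Module.finrank_zero_of_subsingleton

open Classical in
noncomputable def MS.indicatorSubRep (A : Set P)
    (hA : ∀ ⦃x y⦄, x ⋖ y → x ∈ S → y ∈ S → y ∈ A → x ∈ A) : QSubRep (MS K P S) where
  L p := if p ∈ A then ⊤ else ⊥
  compat a v hv := by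
    by_cases h : (hasseQuiver P).s a ∈ S ∧ (hasseQuiver P).t a ∈ S
    · by_cases hs : (hasseQuiver P).s a ∈ A
      · rw [if_pos (hA a.2 h.2 h.1 hs)]
        exact Submodule.mem_top
      · rw [if_neg hs, Submodule.mem_bot] at hv
        simp [hv]
    · simp [MS.φ_eq_zero h]

theorem connectedIn_of_indecomposable_MS (h : Indecomposable (MS K P S)) : connectedIn S := by
  intro x hx y hy
  by_contra hxy
  set A := {p | Relation.ReflTransGen (fun u v => covIn S u v ∨ covIn S v u) x p}
  have hA : ∀ ⦃u v⦄, u ⋖ v → u ∈ S → v ∈ S → v ∈ A → u ∈ A :=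
    fun u v huv hu hv hvA => Relation.ReflTransGen.tail hvA (.inr (huv.covIn hu hv))
  have hAc : ∀ ⦃u v⦄, u ⋖ v → u ∈ S → v ∈ S → v ∈ Aᶜ → u ∈ Aᶜ :=
    fun u v huv hu hv hvA huA => hvA (Relation.ReflTransGen.tail huA (.inl (huv.covIn hu hv)))
  refine h.2 ⟨MS.indicatorSubRep (K := K) A hA, MS.indicatorSubRep Aᶜ hAc,
    ⟨x, ?_⟩, ⟨y, ?_⟩, fun p => ?_, fun p => ?_⟩
  · simpa [MS.indicatorSubRep, A, Relation.ReflTransGen.refl] using MS.top_ne_bot (K := K) hx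
  · simpa [MS.indicatorSubRep, A, hxy] using MS.top_ne_bot (K := K) hy
  · by_cases hp : p ∈ A <;> simp [MS.indicatorSubRep, hp]
  · by_cases hp : p ∈ A <;> simp [MS.indicatorSubRep, hp]

noncomputable def MS.proj (S : Finset P) (p : P) : K →ₗ[K] (MS K P S).M p :=
  LinearMap.codRestrict _ (if p ∈ S then LinearMap.id else 0) fun c => by
    split_ifs <;> simp_all

theorem MS.val_proj (p : P) (c : K) : (MS.proj S p c).val = if p ∈ S then c else 0 := by
  change (if p ∈ S then LinearMap.id else 0 : K →ₗ[K] K) c = _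
  split_ifs <;> rfl

theorem MS.proj_surjective (p : P) : Function.Surjective (MS.proj (K := K) S p) := by
  intro x
  by_cases hp : p ∈ S
  · exact ⟨x.val, Subtype.ext (by simp [MS.val_proj, hp])⟩
  · have := MS.subsingleton (K := K) hp
    exact ⟨0, Subsingleton.elim _ _⟩

theorem MS.proj_injective {p : P} (hp : p ∈ S) : Function.Injective (MS.proj (K := K) S p) :=
  fun c d h => by simpa [MS.val_proj, hp] using congrArg Subtype.val h

theorem MS.proj_eq_zero {p : P} (hp : p ∉ S) : MS.proj (K := K) S p = 0 :=
  LinearMap.ext fun c => Subtype.ext ((MS.val_proj p c).trans (if_neg hp))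

theorem MS.φ_proj {a : (hasseQuiver P).A} (hs : (hasseQuiver P).s a ∈ S) (c : K) :
    (MS K P S).φ a (MS.proj S _ c) = MS.proj S _ c := by
  by_cases ht : (hasseQuiver P).t a ∈ S
  · exact Subtype.ext ((MS.val_φ ⟨hs, ht⟩ _).trans (by simp [MS.val_proj, hs, ht]))
  · have := MS.subsingleton (K := K) ht
    exact Subsingleton.elim _ _

end MS

section ThinQuotient

variable {K : Type} [Field K] {P : Type} [PartialOrder P] [Fintype P] [DecidableEq P]
  (N N' : QSubRep (thinRep K (hasseQuiver P)))

theorem le_of_notMem_thinSupport_sdiff {p : P} (hp : p ∉ thinSupport N' \ thinSupport N) :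
    N'.L p ≤ N.L p := by
  rw [mem_sdiff, not_and_not_right] at hp
  by_cases hN : p ∈ thinSupport N
  · exact (mem_thinSupport.mp hN).symm ▸ le_top
  · exact (notMem_thinSupport.mp (mt hp hN)).symm ▸ bot_le

noncomputable def thinQuotientMap (p : P) :
    N'.L p →ₗ[K] (MS K P (thinSupport N' \ thinSupport N)).M p :=
  (MS.proj _ p).comp (N'.L p).subtype

theorem ker_thinQuotientMap (p : P) :
    LinearMap.ker (thinQuotientMap N N' p) = (N.L p).comap (N'.L p).subtype := by
  by_cases hp : p ∈ thinSupport N' \ thinSupport N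
  · rw [thinQuotientMap, LinearMap.ker_comp_of_ker_eq_bot _
      (LinearMap.ker_eq_bot.mpr (MS.proj_injective hp)), Submodule.ker_subtype,
      notMem_thinSupport.mp (mem_sdiff.mp hp).2, Submodule.comap_bot, Submodule.ker_subtype]
  · rw [thinQuotientMap, MS.proj_eq_zero hp, LinearMap.zero_comp, LinearMap.ker_zero, eq_comm,
      Submodule.comap_subtype_eq_top]
    exact le_of_notMem_thinSupport_sdiff N N' hp

theorem thinQuotientMap_surjective (p : P) : Function.Surjective (thinQuotientMap N N' p) := by
  by_cases hp : p ∈ thinSupport N' \ thinSupport N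
  · intro x
    obtain ⟨c, rfl⟩ := MS.proj_surjective p x
    exact ⟨⟨c, (mem_thinSupport.mp (mem_sdiff.mp hp).1).symm ▸ Submodule.mem_top⟩, rfl⟩
  · have := MS.subsingleton (K := K) hp
    exact fun x => ⟨0, Subsingleton.elim _ _⟩

theorem repIso_quotRep_MS (h : QSubRep.le N N') :
    RepIso (quotRep (thinRep K (hasseQuiver P)) N N' h)
      (MS K P (thinSupport N' \ thinSupport N)) := by
  refine ⟨fun p => (Submodule.quotEquivOfEq _ _ (ker_thinQuotientMap N N' p).symm).trans
    ((thinQuotientMap N N' p).quotKerEquivOfSurjective (thinQuotientMap_surjective N N' p)),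
    fun a x => ?_⟩
  obtain ⟨z, rfl⟩ := Submodule.Quotient.mk_surjective _ x
  change thinQuotientMap N N' ((hasseQuiver P).t a) ⟨z.val, N'.compat a z z.2⟩ =
    (MS K P _).φ a (MS.proj _ ((hasseQuiver P).s a) z.val)
  by_cases hs : (hasseQuiver P).s a ∈ thinSupport N' \ thinSupport N
  · exact (MS.φ_proj hs _).symm
  · have hz : (z.val : K) ∈ N.L ((hasseQuiver P).t a) :=
      N.compat a z (le_of_notMem_thinSupport_sdiff N N' hs z.2)
    rw [MS.proj_eq_zero hs, LinearMap.zero_apply, map_zero, ← LinearMap.mem_ker,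
      ker_thinQuotientMap]
    exact hz

end ThinQuotient

section Filtrations

variable {K : Type} [Field K] {P : Type} [PartialOrder P] [Fintype P] [DecidableEq P] {k : ℕ}

theorem exists_filtration_of_compatiblePart {B : Fin k → Finset P}
    (hpart : IsFinPartition k B) (hcomp : compatiblePart B) :
    ∃ (σ : Equiv.Perm (Fin k)) (F : Fin (k + 1) → QSubRep (thinRep K (hasseQuiver P))),
      (∀ p, (F 0).L p = ⊥) ∧ (∀ p, (F (Fin.last k)).L p = ⊤) ∧
      ∃ hm : ∀ j : Fin k, QSubRep.le (F j.castSucc) (F j.succ),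
        ∀ j : Fin k,
          RepIso (quotRep (thinRep K (hasseQuiver P)) (F j.castSucc) (F j.succ) (hm j))
            (MS K P (B (σ j))) := by
  have := hcomp.isPartialOrder
  obtain ⟨σ, hσ⟩ := exists_perm_fin_of_isPartialOrder (Relation.ReflTransGen (blockRel B))
  set C : Fin k → Finset P := fun m => B (σ m)
  have hCdisj : ∀ i j, i ≠ j → Disjoint (C i) (C j) := fun i j hij =>
    hpart.2.1 _ _ (σ.injective.ne hij)
  have hCcover : ∀ p, ∃ m, p ∈ C m := fun p => by
    obtain ⟨i, hi⟩ := hpart.2.2 p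
    exact ⟨σ.symm i, by simpa [C] using hi⟩
  have hlow := isLowerSet_prefixUnion hCcover fun m m' h => hσ m m' (.single h)
  set F := fun j => lowerSubRep (K := K) (prefixUnion C j) (hlow j)
  have hsupp : ∀ j, thinSupport (F j) = prefixUnion C j := fun j => thinSupport_lowerSubRep _ _
  have hm : ∀ j : Fin k, QSubRep.le (F j.castSucc) (F j.succ) := fun j =>
    lowerSubRep_le_lowerSubRep _ _ (monotone_prefixUnion C (Fin.castSucc_le_succ j))
  refine ⟨σ, F, fun p => notMem_thinSupport.mp ?_, fun p => mem_thinSupport.mp ?_, hm,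
    fun j => ?_⟩
  · simp [hsupp, prefixUnion_zero]
  · simp [hsupp, prefixUnion_last hCcover]
  · have h := repIso_quotRep_MS (F j.castSucc) (F j.succ) (hm j)
    rwa [hsupp, hsupp, ← chainLayer, chainLayer_prefixUnion hCdisj] at h

theorem exists_compatiblePart_of_filtration
    (F : Fin (k + 1) → QSubRep (thinRep K (hasseQuiver P)))
    (hm : ∀ j : Fin k, QSubRep.le (F j.castSucc) (F j.succ))
    (h0 : ∀ p, (F 0).L p = ⊥) (hlast : ∀ p, (F (Fin.last k)).L p = ⊤)
    (hind : ∀ j : Fin k, Indecomposable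
      (quotRep (thinRep K (hasseQuiver P)) (F j.castSucc) (F j.succ) (hm j))) :
    ∃ B : Fin k → Finset P, IsFinPartition k B ∧ (∀ i, connectedIn (B i)) ∧
      compatiblePart B ∧
      ∀ j : Fin k,
        RepIso (quotRep (thinRep K (hasseQuiver P)) (F j.castSucc) (F j.succ) (hm j))
          (MS K P (B j)) := by
  set T := fun j => thinSupport (F j)
  have hT : Monotone T := Fin.monotone_iff_le_succ.mpr fun j => thinSupport_mono (hm j)
  have hT0 : T 0 = ∅ := eq_empty_of_forall_notMem fun p => notMem_thinSupport.mpr (h0 p)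
  have hTlast : T (Fin.last k) = univ :=
    eq_univ_of_forall fun p => mem_thinSupport.mpr (hlast p)
  have hiso : ∀ j, RepIso
      (quotRep (thinRep K (hasseQuiver P)) (F j.castSucc) (F j.succ) (hm j))
      (MS K P (chainLayer T j)) := fun j => repIso_quotRep_MS _ _ (hm j)
  have hindMS : ∀ j, Indecomposable (MS K P (chainLayer T j)) := fun j =>
    (hind j).of_repIso (hiso j)
  refine ⟨chainLayer T, ⟨fun j => nonempty_of_indecomposable_MS (hindMS j),
    fun i j hij => disjoint_chainLayer hT hij, exists_mem_chainLayer hT0 hTlast⟩,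
    fun j => connectedIn_of_indecomposable_MS (hindMS j), ?_, hiso⟩
  exact compatiblePart_of_blockRel_le fun i j =>
    le_of_blockRel_chainLayer hT fun j => isLowerSet_thinSupport (F j)

end Filtrations

end

theorem filtrations_of_MP_are_connected_compatible_partitions_general
    (K : Type) [Field K] (P : Type) [PartialOrder P] [Fintype P] [DecidableEq P] :
    (∀ (k : ℕ) (B : Fin k → Finset P), IsFinPartition k B →
      (∀ i, connectedIn (B i)) → compatiblePart B →
      (∀ i, Indecomposable (MS K P (B i))) ∧
        ∃ (σ : Equiv.Perm (Fin k)) (F : Fin (k + 1) → QSubRep (thinRep K (hasseQuiver P))),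
          (∀ p, (F 0).L p = ⊥) ∧ (∀ p, (F (Fin.last k)).L p = ⊤) ∧
          ∃ hm : ∀ j : Fin k, QSubRep.le (F j.castSucc) (F j.succ),
            ∀ j : Fin k,
              RepIso (quotRep (thinRep K (hasseQuiver P)) (F j.castSucc) (F j.succ) (hm j))
                (MS K P (B (σ j)))) ∧
    ∀ (k : ℕ) (F : Fin (k + 1) → QSubRep (thinRep K (hasseQuiver P)))
      (hm : ∀ j : Fin k, QSubRep.le (F j.castSucc) (F j.succ)),
      (∀ p, (F 0).L p = ⊥) → (∀ p, (F (Fin.last k)).L p = ⊤) →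
      (∀ j : Fin k, Indecomposable
        (quotRep (thinRep K (hasseQuiver P)) (F j.castSucc) (F j.succ) (hm j))) →
      ∃ B : Fin k → Finset P, IsFinPartition k B ∧ (∀ i, connectedIn (B i)) ∧
        compatiblePart B ∧
        ∀ j : Fin k,
          RepIso (quotRep (thinRep K (hasseQuiver P)) (F j.castSucc) (F j.succ) (hm j))
            (MS K P (B j)) := by
  constructor
  · intro k B hpart hconn hcomp
    exact ⟨fun i => indecomposable_MS (hpart.1 i) (hcomp.ordConnected hpart.2.2 i) (hconn i),
      exists_filtration_of_compatiblePart hpart hcomp⟩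
  · exact fun k F hm => exists_compatiblePart_of_filtration F hm

/-- For a finite connected poset `P`: (1) every connected compatible
partition of `P` gives (after reordering by a permutation) a filtration of `M_P` by
subrepresentations whose successive quotients are the (indecomposable) representations
`M_{P_i}`; (2) conversely, every filtration of `M_P` with indecomposable successive
quotients arises in this way from a connected compatible partition. -/
theorem filtrations_of_MP_are_connected_compatible_partitions
    (K : Type) [Field K] (P : Type) [PartialOrder P] [Fintype P] [DecidableEq P]
    (hP : posetConnected P) :
    (∀ (k : ℕ) (B : Fin k → Finset P), IsFinPartition k B →
      (∀ i, connectedIn (B i)) → compatiblePart B →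
      (∀ i, Indecomposable (MS K P (B i))) ∧
        ∃ (σ : Equiv.Perm (Fin k)) (F : Fin (k + 1) → QSubRep (thinRep K (hasseQuiver P))),
          (∀ p, (F 0).L p = ⊥) ∧ (∀ p, (F (Fin.last k)).L p = ⊤) ∧
          ∃ hm : ∀ j : Fin k, QSubRep.le (F j.castSucc) (F j.succ),
            ∀ j : Fin k,
              RepIso (quotRep (thinRep K (hasseQuiver P)) (F j.castSucc) (F j.succ) (hm j))
                (MS K P (B (σ j)))) ∧
    ∀ (k : ℕ) (F : Fin (k + 1) → QSubRep (thinRep K (hasseQuiver P)))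
      (hm : ∀ j : Fin k, QSubRep.le (F j.castSucc) (F j.succ)),
      (∀ p, (F 0).L p = ⊥) → (∀ p, (F (Fin.last k)).L p = ⊤) →
      (∀ j : Fin k, Indecomposable
        (quotRep (thinRep K (hasseQuiver P)) (F j.castSucc) (F j.succ) (hm j))) →
      ∃ B : Fin k → Finset P, IsFinPartition k B ∧ (∀ i, connectedIn (B i)) ∧
        compatiblePart B ∧
        ∀ j : Fin k,
          RepIso (quotRep (thinRep K (hasseQuiver P)) (F j.castSucc) (F j.succ) (hm j))
            (MS K P (B j)) :=
  filtrations_of_MP_are_connected_compatible_partitions_general K P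
end

section
/- Let P be a finite poset. Then {v ∈ R^P : Σ_{p∈P} v_p = 0 and Σ_{p∈L} v_p ≤ 0 for every lower set L of P} = cone({e_y − e_x : x ⋖ y in P}); that is, the stability space D(M_P) of the thin representation M_P equals the non-negative span of the vectors e_y − e_x over the covering relations x ⋖ y of P. -/
attribute [local instance] Classical.propDecidable

/-!
A vector `v` of `D = lowerSetCone P` supported on `S` is decomposed by strong induction on `S`.
If `S` contains `x < y`, remove from `v` the largest multiple of `e_y - e_x` that stays in `D`;
this makes some lower set `L` with `x ∈ L`, `y ∉ L` tight (`∑_L = 0`), and a vector of `D` tight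
on a lower set `L` is the sum of its restrictions to `L` and to the complement of `L`, both again
in `D` and supported on proper subsets of `S`. If `S` is an antichain, then `v = 0`. Every
`e_y - e_x` with `x ≤ y` is a sum of cover vectors along a maximal chain.

Subrepresentations of a thin representation are the `K`/`0` patterns on arrow-closed vertex
sets, and for the Hasse quiver these are exactly the lower sets.
-/

theorem coneSpan_eq_hull {E : Type} [AddCommMonoid E] [Module ℝ E] (X : Set E) :
    coneSpan X = (PointedCone.hull ℝ X : Set E) := by
  ext x
  constructor
  · rintro ⟨n, c, f, hc, hf, rfl⟩
    exact Submodule.sum_mem _ fun j _ =>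
      PointedCone.smul_mem _ (hc j) (PointedCone.subset_hull (hf j))
  · intro hx
    obtain ⟨n, c, f, rfl⟩ := Submodule.mem_span_set'.mp hx
    exact ⟨n, fun j => c j, fun j => f j, fun j => (c j).2, fun j => (f j).2, rfl⟩

theorem isLowerSet_of_covBy_s6 {P : Type} [PartialOrder P] [LocallyFiniteOrder P] {s : Set P}
    (h : ∀ x y, x ⋖ y → y ∈ s → x ∈ s) : IsLowerSet s := by
  intro a b hba ha
  replace hba := le_iff_reflTransGen_covBy.mp hba
  induction hba using Relation.ReflTransGen.head_induction_on with
  | refl => exact ha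
  | head hbc _ hc => exact h _ _ hbc hc

theorem sum_single_sub_single {α : Type} [DecidableEq α] (M : Finset α) (x y : α) :
    ∑ p ∈ M, (Pi.single y 1 - Pi.single x 1 : α → ℝ) p =
      (if y ∈ M then 1 else 0) - (if x ∈ M then 1 else 0) := by
  simp [Finset.sum_sub_distrib, Pi.single_apply]

section Cone

variable (P : Type) [PartialOrder P] [Fintype P]

def lowerSetCone : PointedCone ℝ (P → ℝ) where
  carrier := {v | (∑ p, v p = 0) ∧
    ∀ L : Finset P, (∀ x y : P, x ≤ y → y ∈ L → x ∈ L) → ∑ p ∈ L, v p ≤ 0}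
  zero_mem' := by simp
  add_mem' := by
    rintro v w ⟨hv, hvL⟩ ⟨hw, hwL⟩
    simp only [Set.mem_ofPred_eq, Pi.add_apply, Finset.sum_add_distrib, hv, hw, add_zero,
      true_and]
    exact fun L hL => add_nonpos (hvL L hL) (hwL L hL)
  smul_mem' := by
    rintro c v ⟨hv, hvL⟩
    simp only [Set.mem_ofPred_eq, Pi.smul_apply, ← Finset.smul_sum, hv, smul_zero, true_and]
    exact fun L hL => smul_nonpos_of_nonneg_of_nonpos c.2 (hvL L hL)

variable [DecidableEq P]

def coverVectors : Set (P → ℝ) :=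
  {u | ∃ x y : P, x ⋖ y ∧ u = Pi.single y 1 - Pi.single x 1}

variable {P}

theorem single_sub_single_mem_hull_coverVectors {x y : P} (hxy : x ≤ y) :
    Pi.single y 1 - Pi.single x 1 ∈ PointedCone.hull ℝ (coverVectors P) := by
  let _ := Fintype.toLocallyFiniteOrder (α := P)
  have hlower : IsLowerSet
      {x : P | Pi.single y 1 - Pi.single x 1 ∈ PointedCone.hull ℝ (coverVectors P)} := by
    refine isLowerSet_of_covBy_s6 fun a b hab hb => ?_
    have hsplit : (Pi.single y 1 - Pi.single a 1 : P → ℝ) =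
        (Pi.single y 1 - Pi.single b 1) + (Pi.single b 1 - Pi.single a 1) := by abel
    rw [Set.mem_ofPred_eq, hsplit]
    exact add_mem hb (PointedCone.subset_hull ⟨a, b, hab, rfl⟩)
  exact hlower hxy (by simp)

theorem hull_coverVectors_le_lowerSetCone :
    PointedCone.hull ℝ (coverVectors P) ≤ lowerSetCone P := by
  refine Submodule.span_le.mpr ?_
  rintro _ ⟨x, y, hxy, rfl⟩
  refine ⟨by simp, fun L hL => ?_⟩
  rw [sum_single_sub_single]
  by_cases hy : y ∈ L
  · simp [hy, hL x y hxy.le hy]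
  · simp only [hy, if_false, zero_sub, neg_nonpos]
    positivity

theorem ite_mem_lowerSetCone_of_tight {v : P → ℝ} (hv : v ∈ lowerSetCone P) {L : Finset P}
    (hL : ∀ x y : P, x ≤ y → y ∈ L → x ∈ L) (htight : ∑ p ∈ L, v p = 0) :
    (fun p => if p ∈ L then v p else 0) ∈ lowerSetCone P ∧
      v - (fun p => if p ∈ L then v p else 0) ∈ lowerSetCone P := by
  obtain ⟨hsum, hlow⟩ := hv
  refine ⟨⟨?_, fun M hM => ?_⟩, ⟨?_, fun M hM => ?_⟩⟩
  · rwa [Finset.sum_ite_mem, Finset.univ_inter]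
  · rw [Finset.sum_ite_mem]
    exact hlow _ fun x y hxy hy => Finset.mem_inter.mpr
      ⟨hM x y hxy (Finset.mem_inter.mp hy).1, hL x y hxy (Finset.mem_inter.mp hy).2⟩
  · simp only [Pi.sub_apply, Finset.sum_sub_distrib, Finset.sum_ite_mem, Finset.univ_inter,
      hsum, htight, sub_zero]
  · have hunion : ∑ p ∈ M ∪ L, v p ≤ 0 := hlow _ fun x y hxy hy => by
      rcases Finset.mem_union.mp hy with hy | hy
      exacts [Finset.mem_union_left _ (hM x y hxy hy), Finset.mem_union_right _ (hL x y hxy hy)]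
    have := Finset.sum_union_inter (s₁ := M) (s₂ := L) (f := v)
    simp only [Pi.sub_apply, Finset.sum_sub_distrib, Finset.sum_ite_mem]
    linarith

theorem exists_tight_lowerSet_of_lt {v : P → ℝ} (hv : v ∈ lowerSetCone P) {x y : P}
    (hxy : x < y) :
    ∃ t : ℝ, 0 ≤ t ∧ v - t • (Pi.single y 1 - Pi.single x 1 : P → ℝ) ∈ lowerSetCone P ∧
      ∃ L : Finset P, (∀ a b : P, a ≤ b → b ∈ L → a ∈ L) ∧ x ∈ L ∧ y ∉ L ∧
        ∑ p ∈ L, (v - t • (Pi.single y 1 - Pi.single x 1 : P → ℝ)) p = 0 := by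
  obtain ⟨hsum, hlow⟩ := hv
  let 𝒯 := Finset.univ.filter fun L : Finset P =>
    (∀ a b : P, a ≤ b → b ∈ L → a ∈ L) ∧ x ∈ L ∧ y ∉ L
  have h𝒯 : 𝒯.Nonempty := ⟨Finset.univ.filter (· ≤ x), by
    simpa [𝒯, hxy.not_ge] using fun a b hab hb => hab.trans hb⟩
  -- The largest admissible step along `e_y - e_x` is `-∑ p ∈ L, v p` for the `L` maximizing this
  -- sum: only lower sets containing `x` but not `y` gain mass, and `L` is the first to reach 0.
  obtain ⟨L, hL𝒯, hLmax⟩ := 𝒯.exists_max_image (fun L => ∑ p ∈ L, v p) h𝒯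
  obtain ⟨hL, hxL, hyL⟩ := (Finset.mem_filter.mp hL𝒯).2
  have hsub : ∀ (t : ℝ) (M : Finset P),
      ∑ p ∈ M, (v - t • (Pi.single y 1 - Pi.single x 1 : P → ℝ)) p =
        ∑ p ∈ M, v p - t * ((if y ∈ M then 1 else 0) - (if x ∈ M then 1 else 0)) := by
    intro t M
    simp only [Pi.sub_apply, Pi.smul_apply, smul_eq_mul, Finset.sum_sub_distrib,
      ← Finset.mul_sum, ← sum_single_sub_single]
  refine ⟨-∑ p ∈ L, v p, by linarith [hlow L hL], ⟨?_, fun M hM => ?_⟩, L, hL, hxL, hyL, ?_⟩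
  · rw [hsub]
    simp [hsum]
  · rw [hsub]
    by_cases hyM : y ∈ M
    · simpa [hyM, hM x y hxy.le hyM] using hlow M hM
    by_cases hxM : x ∈ M
    · simpa [hyM, hxM] using hLmax M (Finset.mem_filter.mpr ⟨Finset.mem_univ _, hM, hxM, hyM⟩)
    · simpa [hyM, hxM] using hlow M hM
  · rw [hsub]
    simp [hxL, hyL]

theorem eq_zero_of_mem_lowerSetCone_of_forall_not_lt {v : P → ℝ} (hv : v ∈ lowerSetCone P)
    {S : Finset P} (hS : ∀ p ∉ S, v p = 0) (hanti : ∀ x ∈ S, ∀ y ∈ S, ¬x < y) : v = 0 := by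
  obtain ⟨hsum, hlow⟩ := hv
  have hnonpos : ∀ p, v p ≤ 0 := by
    intro p
    by_cases hp : p ∈ S
    · have hIic := hlow (Finset.univ.filter (· ≤ p)) fun a b hab hb => by
        simp only [Finset.mem_filter, Finset.mem_univ, true_and] at hb ⊢
        exact hab.trans hb
      rwa [Finset.sum_eq_single_of_mem p (by simp) fun q hq hqp =>
        hS q fun hqS => hanti q hqS p hp (lt_of_le_of_ne (by simpa using hq) hqp)] at hIic
    · exact (hS p hp).le
  funext p
  exact (Finset.sum_eq_zero_iff_of_nonpos fun q _ => hnonpos q).mp hsum p (Finset.mem_univ p)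

theorem mem_hull_coverVectors_of_support_subset (S : Finset P) {v : P → ℝ}
    (hv : v ∈ lowerSetCone P) (hS : ∀ p ∉ S, v p = 0) :
    v ∈ PointedCone.hull ℝ (coverVectors P) := by
  induction S using Finset.strongInduction generalizing v with
  | H S ih =>
  by_cases hlt : ∃ x ∈ S, ∃ y ∈ S, x < y
  · obtain ⟨x, hx, y, hy, hxy⟩ := hlt
    obtain ⟨t, ht, hw, L, hL, hxL, hyL, htight⟩ := exists_tight_lowerSet_of_lt hv hxy
    set w := v - t • (Pi.single y 1 - Pi.single x 1 : P → ℝ) with hw_def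
    set u : P → ℝ := fun p => if p ∈ L then w p else 0
    obtain ⟨hu, hwu⟩ := ite_mem_lowerSetCone_of_tight hw hL htight
    have hwS : ∀ p ∉ S, w p = 0 := fun p hp => by
      simp [w, hS p hp, (ne_of_mem_of_not_mem hx hp).symm, (ne_of_mem_of_not_mem hy hp).symm]
    have hdecomp : v = u + (w - u) + t • (Pi.single y 1 - Pi.single x 1) := by
      rw [hw_def]; abel
    rw [hdecomp]
    refine add_mem (add_mem (ih (S ∩ L) ?_ hu ?_) (ih (S \ L) ?_ hwu ?_))
      (PointedCone.smul_mem _ ht (single_sub_single_mem_hull_coverVectors hxy.le))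
    · exact Finset.ssubset_iff_subset_ne.mpr ⟨Finset.inter_subset_left, fun h =>
        hyL (Finset.mem_inter.mp (h ▸ hy)).2⟩
    · intro p hp
      by_cases hpL : p ∈ L
      · simp [u, hpL, hwS p fun hpS => hp (Finset.mem_inter.mpr ⟨hpS, hpL⟩)]
      · simp [u, hpL]
    · exact Finset.ssubset_iff_subset_ne.mpr ⟨Finset.sdiff_subset, fun h =>
        (Finset.mem_sdiff.mp (h ▸ hx)).2 hxL⟩
    · intro p hp
      by_cases hpL : p ∈ L
      · simp [u, hpL]
      · simp [u, hpL, hwS p fun hpS => hp (Finset.mem_sdiff.mpr ⟨hpS, hpL⟩)]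
  · rw [eq_zero_of_mem_lowerSetCone_of_forall_not_lt hv hS
      fun x hx y hy hxy => hlt ⟨x, hx, y, hy, hxy⟩]
    exact zero_mem _

theorem lowerSetCone_eq_hull_coverVectors :
    lowerSetCone P = PointedCone.hull ℝ (coverVectors P) :=
  le_antisymm (fun _ hv => mem_hull_coverVectors_of_support_subset Finset.univ hv (by simp))
    hull_coverVectors_le_lowerSetCone

end Cone

theorem finrank_submodule_self {K : Type} [Field K] (U : Submodule K K) :
    Module.finrank K U = if U = ⊤ then 1 else 0 := by
  rcases Ideal.eq_bot_or_top U with rfl | rfl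
  · rw [if_neg bot_ne_top, finrank_bot]
  · rw [if_pos rfl, finrank_top, Module.finrank_self]

theorem ite_top_bot_eq_top_iff {α : Type} [PartialOrder α] [BoundedOrder α] [Nontrivial α]
    (p : Prop) [Decidable p] : (if p then ⊤ else ⊥ : α) = ⊤ ↔ p := by
  split_ifs with h <;> simp [h]

section ThinRep

variable (K : Type) [Field K] {Q : FinQuiver}

noncomputable def arrowClosedSubRep (L : Finset Q.V) (hL : ∀ a : Q.A, Q.s a ∈ L → Q.t a ∈ L) :
    QSubRep (thinRep K Q) where
  L i := if i ∈ L then ⊤ else ⊥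
  compat a z hz := by
    split_ifs at hz ⊢ with ht hs hs
    · exact Submodule.mem_top
    · exact Submodule.mem_top
    · exact absurd (hL a hs) ht
    · rw [Submodule.mem_bot] at hz
      rw [hz, map_zero]
      exact zero_mem _

theorem thinRep_subRep_target_eq_top (N : QSubRep (thinRep K Q)) (a : Q.A) (h : N.L (Q.s a) = ⊤) :
    N.L (Q.t a) = ⊤ := by
  have hone : ∀ i, N.L i = ⊤ ↔ (1 : K) ∈ N.L i := fun i =>
    Ideal.eq_top_iff_one (α := K) (N.L i)
  exact (hone _).mpr (N.compat a _ ((hone _).mp h))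

theorem stabInner_ite (v : Q.V → ℝ) (L : Finset Q.V) :
    stabInner v (fun i => if i ∈ L then 1 else 0) = ∑ i ∈ L, v i := by
  simp [stabInner, Finset.sum_ite_mem]

theorem stabInner_thinRep_dimVec (v : Q.V → ℝ) :
    stabInner v (thinRep K Q).dimVec = ∑ i, v i := by
  have hdim : (thinRep K Q).dimVec = fun i => if i ∈ Finset.univ then 1 else 0 :=
    funext fun i => by
      rw [if_pos (Finset.mem_univ i)]
      exact Module.finrank_self K
  rw [hdim, stabInner_ite]

theorem stabInner_finrank_thinRep_subRep (N : QSubRep (thinRep K Q)) (v : Q.V → ℝ) :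
    stabInner v (fun i => Module.finrank K (N.L i)) =
      ∑ i ∈ Finset.univ.filter (fun i => N.L i = ⊤), v i := by
  have hfinrank : ∀ i, Module.finrank K (N.L i) = if N.L i = ⊤ then 1 else 0 := fun i =>
    finrank_submodule_self (N.L i)
  simp only [hfinrank]
  simp [stabInner, Finset.sum_filter]

theorem stabSpace_thinRep :
    stabSpace (thinRep K Q) = {v | (∑ i, v i = 0) ∧
      ∀ L : Finset Q.V, (∀ a : Q.A, Q.s a ∈ L → Q.t a ∈ L) → ∑ i ∈ L, v i ≤ 0} := by
  ext v
  refine ⟨fun ⟨h0, hN⟩ => ⟨?_, fun L hL => ?_⟩, fun ⟨h0, hL⟩ => ⟨?_, fun N => ?_⟩⟩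
  · rwa [← stabInner_thinRep_dimVec K]
  · have hfilter : Finset.univ.filter (fun i => (arrowClosedSubRep K L hL).L i = ⊤) = L := by
      ext i
      simp only [Finset.mem_filter, Finset.mem_univ, true_and]
      exact ite_top_bot_eq_top_iff (α := Submodule K K) (i ∈ L)
    simpa [stabInner_finrank_thinRep_subRep, hfilter] using hN (arrowClosedSubRep K L hL)
  · rwa [stabInner_thinRep_dimVec]
  · rw [stabInner_finrank_thinRep_subRep]
    exact hL _ fun a ha => by simpa using thinRep_subRep_target_eq_top K N a (by simpa using ha)

end ThinRep

theorem hasseQuiver_arrowClosed_iff {P : Type} [PartialOrder P] [Fintype P] [DecidableEq P]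
    (L : Finset P) :
    (∀ a : (hasseQuiver P).A, (hasseQuiver P).s a ∈ L → (hasseQuiver P).t a ∈ L) ↔
      ∀ x y : P, x ≤ y → y ∈ L → x ∈ L := by
  let _ := Fintype.toLocallyFiniteOrder (α := P)
  refine ⟨fun h x y hxy hy => ?_, fun h a => h (a.1.1 : P) (a.1.2 : P) a.2.le⟩
  exact isLowerSet_of_covBy_s6 (s := (L : Set P)) (fun x y hxy => h ⟨(x, y), hxy⟩) hxy hy

theorem stabSpace_thinRep_hasseQuiver (K : Type) [Field K] {P : Type} [PartialOrder P]
    [Fintype P] [DecidableEq P] :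
    stabSpace (thinRep K (hasseQuiver P)) = (lowerSetCone P : Set (P → ℝ)) := by
  rw [stabSpace_thinRep]
  ext v
  exact and_congr_right' <|
    forall_congr' fun L => imp_congr_left (hasseQuiver_arrowClosed_iff (P := P) L)

/-- For a finite poset `P`, the set of `v ∈ ℝ^P` summing to zero and
non-positive on every lower set is exactly the non-negative span of the vectors
`e_y − e_x` over the covering relations `x ⋖ y`; that is, the stability space of the thin
representation `M_P` equals this non-negative span. -/
theorem stability_space_of_poset_is_spanned_by_covers
    (K : Type) [Field K] (P : Type) [PartialOrder P] [Fintype P] [DecidableEq P] :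
    ({v : P → ℝ | (∑ p, v p = 0) ∧
        ∀ L : Finset P, (∀ x y : P, x ≤ y → y ∈ L → x ∈ L) → ∑ p ∈ L, v p ≤ 0} =
      coneSpan {u : P → ℝ | ∃ x y : P, x ⋖ y ∧
        u = Pi.single y (1 : ℝ) - Pi.single x (1 : ℝ)}) ∧
    stabSpace (thinRep K (hasseQuiver P)) =
      coneSpan {u : P → ℝ | ∃ x y : P, x ⋖ y ∧
        u = Pi.single y (1 : ℝ) - Pi.single x (1 : ℝ)} := by
  have hcone : (lowerSetCone P : Set (P → ℝ)) = coneSpan (coverVectors P) := by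
    rw [coneSpan_eq_hull, lowerSetCone_eq_hull_coverVectors]
  exact ⟨hcone, (stabSpace_thinRep_hasseQuiver K).trans hcone⟩
end
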